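/- arXiv:1309.7467 — 6 statements merged into one kernel-verified Lean document; each statement's English description precedes it below -/
import Mathlib

section
/- Let F be any field and D ∈ F an element that is not a square, and let E = F(√D) be the resulting quadratic extension. Regard GL₂(F) as a subgroup of GL₂(E), let B(E) be the subgroup of invertible upper-triangular 2×2 matrices over E, and set γ₀ = [[1,0],[√D,1]]. Then GL₂(E) = B(E)·GL₂(F) ∪ B(E)·γ₀·GL₂(F), and this union is disjoint. Equivalently, under the right-multiplication action of GL₂(F) on B(E)\GL₂(E) there are exactly two orbits, represented by the identity coset B(E) and by B(E)γ₀. -/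
/-!
A coset `B(E) g` is determined by the bottom row of `g` up to a scalar, i.e. by a point of
`ℙ¹(E)`, on which `GL₂(F)` acts by right multiplication. The `F`-rational points form the orbit
of `B(E)`. Since `E = F + F √D`, every other point is `[a + b √D : 1]` with `b ≠ 0`, the image of
`[√D : 1]` under `!![b, 0; a, 1]`, so it lies in the orbit of `B(E) γ₀`. The two orbits differ:
if `(√D, 1) h` with `h ∈ GL₂(F)` were proportional to a nonzero `x ∈ F²`, the coefficients of
`1` and `√D` in their vanishing cross product would make both rows of `h` proportional to `x`,
so `det h = 0`.
-/

section

universe u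

variable {E : Type u} [Field E]

namespace Matrix

lemma mul_apply_one_of_apply_one_zero {b : Matrix (Fin 2) (Fin 2) E} (hb : b 1 0 = 0)
    (k : Matrix (Fin 2) (Fin 2) E) : (b * k) 1 = b 1 1 • k 1 := by
  ext j
  simp [mul_apply, Fin.sum_univ_two, hb]

lemma apply_one_one_ne_zero_of_apply_one_zero {b : Matrix (Fin 2) (Fin 2) E} (hb : b 1 0 = 0)
    (hdet : b.det ≠ 0) : b 1 1 ≠ 0 :=
  fun h => hdet (by simp [det_fin_two, hb, h])

lemma exists_upperTriangular_mul_eq_of_row_one_eq_smul {m k : Matrix (Fin 2) (Fin 2) E}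
    (hm : m.det ≠ 0) (hk : k.det ≠ 0) {l : E} (h : m 1 = l • k 1) :
    ∃ b : Matrix (Fin 2) (Fin 2) E, b 1 0 = 0 ∧ b.det ≠ 0 ∧ m = b * k := by
  have hkk : k * k⁻¹ = 1 := mul_nonsing_inv k hk.isUnit
  refine ⟨m * k⁻¹, ?_, ?_, ?_⟩
  · have h10 : (k * k⁻¹) 1 0 = 0 := by simp [hkk]
    rw [mul_apply, Fin.sum_univ_two] at h10 ⊢
    rw [h]
    simp only [Pi.smul_apply, smul_eq_mul]
    linear_combination l * h10
  · simpa [det_mul, det_nonsing_inv, hk] using hm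
  · rw [Matrix.mul_assoc, nonsing_inv_mul k hk.isUnit, Matrix.mul_one]

lemma lowerUnitriangular_mul_apply_one (s : E) (k : Matrix (Fin 2) (Fin 2) E) :
    (!![1, 0; s, 1] * k) 1 = s • k 0 + k 1 := by
  ext j
  simp [mul_apply, Fin.sum_univ_two]

end Matrix

lemma Subfield.eq_zero_and_eq_zero_of_add_mul_eq_zero {F : Subfield E} {s a b : E} (hs : s ∉ F)
    (ha : a ∈ F) (hb : b ∈ F) (h : a + b * s = 0) : a = 0 ∧ b = 0 := by
  by_cases hb0 : b = 0
  · exact ⟨by simpa [hb0] using h, hb0⟩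
  · refine absurd ?_ hs
    have : s = -a / b := by
      field_simp
      linear_combination h
    exact this ▸ F.div_mem (F.neg_mem ha) hb

open Matrix

variable (F : Subfield E)

/-- `g ∈ B(E) γ GL₂(F)`, where `B(E)` is the group of invertible upper-triangular matrices. -/
def InBorelDoubleCoset (γ g : Matrix (Fin 2) (Fin 2) E) : Prop :=
  ∃ b h : Matrix (Fin 2) (Fin 2) E,
    b 1 0 = 0 ∧ b.det ≠ 0 ∧ (∀ i j, h i j ∈ F) ∧ h.det ≠ 0 ∧ g = b * γ * h

lemma inBorelDoubleCoset_iff {γ g : Matrix (Fin 2) (Fin 2) E} (hγ : γ.det ≠ 0)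
    (hg : g.det ≠ 0) :
    InBorelDoubleCoset F γ g ↔ ∃ l : E, ∃ h : Matrix (Fin 2) (Fin 2) E,
      l ≠ 0 ∧ (∀ i j, h i j ∈ F) ∧ h.det ≠ 0 ∧ g 1 = l • (γ * h) 1 := by
  constructor
  · rintro ⟨b, h, hb, hbdet, hF, hdet, rfl⟩
    refine ⟨b 1 1, h, apply_one_one_ne_zero_of_apply_one_zero hb hbdet, hF, hdet, ?_⟩
    rw [Matrix.mul_assoc, mul_apply_one_of_apply_one_zero hb]
  · rintro ⟨l, h, -, hF, hdet, hrow⟩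
    obtain ⟨b, hb, hbdet, rfl⟩ := exists_upperTriangular_mul_eq_of_row_one_eq_smul hg
      (by simpa [det_mul] using And.intro hγ hdet) hrow
    exact ⟨b, h, hb, hbdet, hF, hdet, (Matrix.mul_assoc _ _ _).symm⟩

variable {F}

lemma inBorelDoubleCoset_one_or_inBorelDoubleCoset {s : E}
    (hgen : ∀ x : E, ∃ a ∈ F, ∃ b ∈ F, x = a + b * s) {g : Matrix (Fin 2) (Fin 2) E}
    (hg : g.det ≠ 0) :
    InBorelDoubleCoset F 1 g ∨ InBorelDoubleCoset F !![1, 0; s, 1] g := by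
  rw [inBorelDoubleCoset_iff F (by simp) hg,
    inBorelDoubleCoset_iff F (by simp [det_fin_two_of]) hg]
  by_cases hd : g 1 1 = 0
  · have hc : g 1 0 ≠ 0 := fun hc => hg (by simp [det_fin_two, hc, hd])
    refine .inl ⟨g 1 0, !![0, 1; 1, 0], hc, ?_, by simp [det_fin_two_of], ?_⟩
    · simp [Fin.forall_fin_two, F.zero_mem, F.one_mem]
    · ext j; fin_cases j <;> simp [hd]
  obtain ⟨a, ha, b, hb, hab⟩ := hgen (g 1 0 / g 1 1)
  have hc : g 1 0 = g 1 1 * (a + b * s) := by rw [← hab]; field_simp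
  by_cases hb0 : b = 0
  · refine .inl ⟨g 1 1, !![1, 0; a, 1], hd, ?_, by simp [det_fin_two_of], ?_⟩
    · simp [Fin.forall_fin_two, ha, F.zero_mem, F.one_mem]
    · ext j; fin_cases j <;> simp [hc, hb0]
  · refine .inr ⟨g 1 1, !![b, 0; a, 1], hd, ?_, by simp [det_fin_two_of, hb0], ?_⟩
    · simp [Fin.forall_fin_two, ha, hb, F.zero_mem, F.one_mem]
    · rw [lowerUnitriangular_mul_apply_one]
      ext j; fin_cases j <;> simp [hc, add_comm, mul_comm]

lemma not_inBorelDoubleCoset_one_and_inBorelDoubleCoset {s : E} (hs : s ∉ F)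
    {g : Matrix (Fin 2) (Fin 2) E} (hg : g.det ≠ 0) :
    ¬ (InBorelDoubleCoset F 1 g ∧ InBorelDoubleCoset F !![1, 0; s, 1] g) := by
  rw [inBorelDoubleCoset_iff F (by simp) hg,
    inBorelDoubleCoset_iff F (by simp [det_fin_two_of]) hg]
  rintro ⟨⟨l, h, hl, hF, hdet, hrow⟩, ⟨m, k, hm, kF, kdet, krow⟩⟩
  set x := h 1
  have hx : ![x 1, -x 0] ≠ 0 := fun hx0 => hdet <| by
    have := congrFun hx0
    simp [Fin.forall_fin_two, x] at this
    simp [det_fin_two, this]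
  have hrow' : ∀ j, l * x j = m * (s * k 0 j + k 1 j) := fun j => by
    have hl := congrFun hrow j
    have hm := congrFun krow j
    simp only [lowerUnitriangular_mul_apply_one, Matrix.one_mul, Pi.smul_apply, Pi.add_apply,
      smul_eq_mul] at hl hm
    rw [← hl, hm]
  -- the cross product of `x` with `(s, 1) k`, sorted by the coefficients of `1` and `s`
  have cross : (x 0 * k 1 1 - x 1 * k 1 0) + (x 0 * k 0 1 - x 1 * k 0 0) * s = 0 := by
    apply mul_left_cancel₀ (mul_ne_zero hl hm)
    linear_combination m * (s * k 0 1 + k 1 1) * hrow' 0 - m * (s * k 0 0 + k 1 0) * hrow' 1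
  have xF : ∀ j, x j ∈ F := hF 1
  obtain ⟨h₁, h₀⟩ := Subfield.eq_zero_and_eq_zero_of_add_mul_eq_zero hs
    (F.sub_mem (F.mul_mem (xF 0) (kF 1 1)) (F.mul_mem (xF 1) (kF 1 0)))
    (F.sub_mem (F.mul_mem (xF 0) (kF 0 1)) (F.mul_mem (xF 1) (kF 0 0))) cross
  have hkx : k *ᵥ ![x 1, -x 0] = 0 := by
    ext i
    fin_cases i
    · simp [mulVec, dotProduct, Fin.sum_univ_two]; linear_combination -h₀
    · simp [mulVec, dotProduct, Fin.sum_univ_two]; linear_combination -h₁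
  exact kdet (exists_mulVec_eq_zero_iff.mp ⟨_, hx, hkx⟩)

end

theorem stmt_0_general
    (E : Type*) [Field E] (F : Subfield E)
    (D sqrtD : E)
    (hDns : ¬ ∃ y ∈ F, y * y = D)
    (hsq : sqrtD * sqrtD = D)
    (hgen : ∀ x : E, ∃ a ∈ F, ∃ b ∈ F, x = a + b * sqrtD) :
    ∀ g : Matrix (Fin 2) (Fin 2) E, g.det ≠ 0 →
      Xor'
        (∃ b h : Matrix (Fin 2) (Fin 2) E,
          b 1 0 = 0 ∧ b.det ≠ 0 ∧ (∀ i j, h i j ∈ F) ∧ h.det ≠ 0 ∧ g = b * h)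
        (∃ b h : Matrix (Fin 2) (Fin 2) E,
          b 1 0 = 0 ∧ b.det ≠ 0 ∧ (∀ i j, h i j ∈ F) ∧ h.det ≠ 0 ∧
            g = b * !![1, 0; sqrtD, 1] * h) := by
  intro g hg
  have hs : sqrtD ∉ F := fun hs => hDns ⟨sqrtD, hs, hsq⟩
  have cover := inBorelDoubleCoset_one_or_inBorelDoubleCoset hgen hg
  have disjoint := not_inBorelDoubleCoset_one_and_inBorelDoubleCoset hs hg
  simp only [InBorelDoubleCoset, Matrix.mul_one] at cover disjoint
  exact (xor_iff_or_and_not_and _ _).mpr ⟨cover, disjoint⟩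

/-- Let `F` be a field, `D ∈ F` not a square, and `E = F(√D)` the
resulting quadratic extension (realized as: `E` a field containing `F` as a subfield,
together with an element `sqrtD` with `sqrtD² = D` generating `E` over `F`).  Regarding
`GL₂(F)` inside `GL₂(E)` and letting `B(E)` be the invertible upper-triangular matrices
and `γ₀ = [[1,0],[√D,1]]`, every element of `GL₂(E)` lies in exactly one of the two sets
`B(E)·GL₂(F)` and `B(E)·γ₀·GL₂(F)`. -/
theorem stmt_0
    (E : Type*) [Field E] (F : Subfield E)
    (D sqrtD : E) (hDF : D ∈ F)
    (hDns : ¬ ∃ y ∈ F, y * y = D)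
    (hsq : sqrtD * sqrtD = D)
    (hgen : ∀ x : E, ∃ a ∈ F, ∃ b ∈ F, x = a + b * sqrtD) :
    ∀ g : Matrix (Fin 2) (Fin 2) E, g.det ≠ 0 →
      Xor'
        (∃ b h : Matrix (Fin 2) (Fin 2) E,
          b 1 0 = 0 ∧ b.det ≠ 0 ∧ (∀ i j, h i j ∈ F) ∧ h.det ≠ 0 ∧ g = b * h)
        (∃ b h : Matrix (Fin 2) (Fin 2) E,
          b 1 0 = 0 ∧ b.det ≠ 0 ∧ (∀ i j, h i j ∈ F) ∧ h.det ≠ 0 ∧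
            g = b * !![1, 0; sqrtD, 1] * h) :=
  stmt_0_general E F D sqrtD hDns hsq hgen
end

section
/- Let η₁, η₂ be unramified quasi-characters of Eˣ and Φ the normalized spherical vector on GL₂(E) attached to (η₁,η₂). Let a₁, a₂ ∈ Eˣ and m ∈ E, and consider Φ(γ₀·[[a₁,m],[0,a₂]]) = Φ([[a₁,m],[a₁√D, a₂+m√D]]). Then: (1) if a₂ + m√D = 0 or v_E(a₂+m√D) ≥ v_E(a₁√D), then Φ(γ₀[[a₁,m],[0,a₂]]) = η₁(a₂/√D)·η₂(a₁√D); (2) if a₂ + m√D ≠ 0 and v_E(a₂+m√D) ≤ v_E(a₁√D), then Φ(γ₀[[a₁,m],[0,a₂]]) = η₁(a₁a₂/(a₂+m√D))·η₂(a₂+m√D). -/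
/-!
Iwasawa decomposition: dividing the bottom row `(c, d)` of `g` by whichever entry `x` has the
smaller valuation writes `g` as an upper triangular matrix with diagonal `(det g / x, x)` times an
integral matrix of determinant `1`, so `Φ g = η₁ (det g / x) η₂ x`. For
`g = γ₀ [[a₁, m], [0, a₂]]` the bottom row is `(a₁√D, a₂ + m√D)` and `det g = a₁ a₂`.
-/

namespace Spherical

open Matrix

variable {E : Type*} [Field E] {v : E → ℤ}

theorem map_one_of_map_mul (hv : ∀ x y : E, x ≠ 0 → y ≠ 0 → v (x * y) = v x + v y) :
    v 1 = 0 := by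
  have h := hv 1 1 one_ne_zero one_ne_zero
  rw [one_mul] at h
  omega

theorem map_neg_one_of_map_mul (hv : ∀ x y : E, x ≠ 0 → y ≠ 0 → v (x * y) = v x + v y) :
    v (-1) = 0 := by
  have h := hv (-1) (-1) (neg_ne_zero.2 one_ne_zero) (neg_ne_zero.2 one_ne_zero)
  rw [neg_mul_neg, one_mul, map_one_of_map_mul hv] at h
  omega

theorem map_div_of_map_mul (hv : ∀ x y : E, x ≠ 0 → y ≠ 0 → v (x * y) = v x + v y)
    {x y : E} (hx : x ≠ 0) (hy : y ≠ 0) : v (x / y) = v x - v y := by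
  have h := hv (x / y) y (div_ne_zero hx hy) hy
  rw [div_mul_cancel₀ _ hy] at h
  omega

theorem eq_upperTriangular_mul_weyl (a b c d : E) (hc : c ≠ 0) :
    !![a, b; c, d] = !![(a * d - b * c) / c, a; 0, c] * !![0, -1; 1, d / c] := by
  ext i j
  fin_cases i <;> fin_cases j <;> simp [mul_apply, mul_div_cancel₀ _ hc]
  field_simp
  ring

theorem eq_upperTriangular_mul_lowerUnipotent (a b c d : E) (hd : d ≠ 0) :
    !![a, b; c, d] = !![(a * d - b * c) / d, b; 0, d] * !![1, 0; c / d, 1] := by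
  ext i j
  fin_cases i <;> fin_cases j <;> simp [mul_apply, mul_div_cancel₀ _ hd]
  field_simp
  ring

/-- `GL₂(O_E)` is encoded as the matrices whose nonzero entries have valuation `≥ 0` and whose
determinant is a nonzero unit. -/
structure IsNormalizedSpherical (v : E → ℤ) (η₁ η₂ : E → ℂ)
    (Φ : Matrix (Fin 2) (Fin 2) E → ℂ) : Prop where
  borel_mul : ∀ (b₁ b₂ n : E) (g : Matrix (Fin 2) (Fin 2) E), b₁ ≠ 0 → b₂ ≠ 0 →
    g.det ≠ 0 → Φ (!![b₁, n; 0, b₂] * g) = η₁ b₁ * η₂ b₂ * Φ g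
  mul_integral : ∀ g k : Matrix (Fin 2) (Fin 2) E, g.det ≠ 0 →
    (∀ i j, k i j = 0 ∨ 0 ≤ v (k i j)) → k.det ≠ 0 → v k.det = 0 → Φ (g * k) = Φ g
  map_one : Φ 1 = 1

namespace IsNormalizedSpherical

variable {η₁ η₂ : E → ℂ} {Φ : Matrix (Fin 2) (Fin 2) E → ℂ}

theorem apply_upperTriangular_mul (hΦ : IsNormalizedSpherical v η₁ η₂ Φ) (hv₁ : v 1 = 0)
    {b₁ b₂ n : E} (hb₁ : b₁ ≠ 0) (hb₂ : b₂ ≠ 0) {k : Matrix (Fin 2) (Fin 2) E}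
    (hk : ∀ i j, k i j = 0 ∨ 0 ≤ v (k i j)) (hk₁ : k.det = 1) :
    Φ (!![b₁, n; 0, b₂] * k) = η₁ b₁ * η₂ b₂ := by
  have hβ : (!![b₁, n; 0, b₂] : Matrix (Fin 2) (Fin 2) E).det ≠ 0 := by
    simp [det_fin_two_of, hb₁, hb₂]
  rw [hΦ.mul_integral _ k hβ hk (by simp [hk₁]) (by rw [hk₁, hv₁])]
  simpa [hΦ.map_one] using hΦ.borel_mul b₁ b₂ n 1 hb₁ hb₂ (by simp)

theorem apply_of_le_left (hΦ : IsNormalizedSpherical v η₁ η₂ Φ)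
    (hv : ∀ x y : E, x ≠ 0 → y ≠ 0 → v (x * y) = v x + v y)
    {a b c d : E} (hdet : a * d - b * c ≠ 0) (hc : c ≠ 0) (hcd : d = 0 ∨ v c ≤ v d) :
    Φ !![a, b; c, d] = η₁ ((a * d - b * c) / c) * η₂ c := by
  rw [eq_upperTriangular_mul_weyl a b c d hc]
  refine hΦ.apply_upperTriangular_mul (map_one_of_map_mul hv) (div_ne_zero hdet hc) hc
    (fun i j => ?_) (by simp [det_fin_two_of])
  fin_cases i <;> fin_cases j
  · exact .inl rfl
  · exact .inr (map_neg_one_of_map_mul hv).ge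
  · exact .inr (map_one_of_map_mul hv).ge
  · by_cases hd : d = 0
    · exact .inl (by simp [hd])
    · exact .inr (by simp [map_div_of_map_mul hv hd hc, hcd.resolve_left hd])

theorem apply_of_le_right (hΦ : IsNormalizedSpherical v η₁ η₂ Φ)
    (hv : ∀ x y : E, x ≠ 0 → y ≠ 0 → v (x * y) = v x + v y)
    {a b c d : E} (hdet : a * d - b * c ≠ 0) (hd : d ≠ 0) (hdc : c = 0 ∨ v d ≤ v c) :
    Φ !![a, b; c, d] = η₁ ((a * d - b * c) / d) * η₂ d := by
  rw [eq_upperTriangular_mul_lowerUnipotent a b c d hd]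
  refine hΦ.apply_upperTriangular_mul (map_one_of_map_mul hv) (div_ne_zero hdet hd) hd
    (fun i j => ?_) (by simp [det_fin_two_of])
  fin_cases i <;> fin_cases j
  · exact .inr (map_one_of_map_mul hv).ge
  · exact .inl rfl
  · by_cases hc : c = 0
    · exact .inl (by simp [hc])
    · exact .inr (by simp [map_div_of_map_mul hv hc hd, hdc.resolve_left hc])
  · exact .inr (map_one_of_map_mul hv).ge

end IsNormalizedSpherical

end Spherical

theorem stmt_2_general
    (E : Type*) [Field E] (F : Subfield E)
    (v : E → ℤ)
    (hvmul : ∀ x y : E, x ≠ 0 → y ≠ 0 → v (x * y) = v x + v y)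
    (D sqrtD : E) (hD0 : D ≠ 0)
    (hsq : sqrtD * sqrtD = D)
    (η₁ η₂ : E → ℂ)
    (Φ : Matrix (Fin 2) (Fin 2) E → ℂ)
    (hΦB : ∀ (b₁ b₂ n : E) (g : Matrix (Fin 2) (Fin 2) E), b₁ ≠ 0 → b₂ ≠ 0 →
        g.det ≠ 0 → Φ (!![b₁, n; 0, b₂] * g) = η₁ b₁ * η₂ b₂ * Φ g)
    (hΦK : ∀ g k : Matrix (Fin 2) (Fin 2) E, g.det ≠ 0 →
        (∀ i j, k i j = 0 ∨ 0 ≤ v (k i j)) → k.det ≠ 0 → v k.det = 0 →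
        Φ (g * k) = Φ g)
    (hΦ1 : Φ 1 = 1) :
    ∀ a₁ a₂ m : E, a₁ ∈ F → a₂ ∈ F → m ∈ F → a₁ ≠ 0 → a₂ ≠ 0 →
      ((a₂ + m * sqrtD = 0 ∨ v (a₁ * sqrtD) ≤ v (a₂ + m * sqrtD)) →
        Φ (!![1, 0; sqrtD, 1] * !![a₁, m; 0, a₂]) =
          η₁ (a₂ / sqrtD) * η₂ (a₁ * sqrtD))
      ∧
      ((a₂ + m * sqrtD ≠ 0 ∧ v (a₂ + m * sqrtD) ≤ v (a₁ * sqrtD)) →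
        Φ (!![1, 0; sqrtD, 1] * !![a₁, m; 0, a₂]) =
          η₁ (a₁ * a₂ / (a₂ + m * sqrtD)) * η₂ (a₂ + m * sqrtD)) := by
  intro a₁ a₂ m _ _ _ ha₁ ha₂
  have hΦ : Spherical.IsNormalizedSpherical v η₁ η₂ Φ := ⟨hΦB, hΦK, hΦ1⟩
  have hs : sqrtD ≠ 0 := by
    rintro rfl
    exact hD0 (by rw [← hsq, mul_zero])
  have hγ : !![(1 : E), 0; sqrtD, 1] * !![a₁, m; 0, a₂] =
      !![a₁, m; a₁ * sqrtD, a₂ + m * sqrtD] := by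
    simp only [Matrix.mul_fin_two, one_mul, zero_mul, mul_zero, add_zero]
    rw [mul_comm sqrtD a₁, add_comm, mul_comm sqrtD m]
  have hdet : a₁ * (a₂ + m * sqrtD) - m * (a₁ * sqrtD) = a₁ * a₂ := by ring
  rw [hγ]
  refine ⟨fun hle => ?_, fun ⟨hd, hle⟩ => ?_⟩
  · rw [hΦ.apply_of_le_left hvmul (by simp [hdet, ha₁, ha₂]) (mul_ne_zero ha₁ hs) hle, hdet]
    congr 2
    field_simp
  · rw [hΦ.apply_of_le_right hvmul (by simp [hdet, ha₁, ha₂]) hd (.inr hle), hdet]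

/-- `F` a nonarchimedean local field with valuation `v`, uniformizer `ϖ`
and residue cardinality `q`; `E = F(√D)` the unramified quadratic extension (odd residue
characteristic, `D` a non-square unit), `v` also denoting the valuation on `E` extending
that of `F` with `v ϖ = 1`.  For unramified quasi-characters `η₁, η₂` of `Eˣ` and `Φ` the
normalized spherical vector on `GL₂(E)` attached to `(η₁, η₂)`, the value
`Φ(γ₀·[[a₁,m],[0,a₂]])` is as computed in the two cases of the statement. -/
theorem stmt_2
    (E : Type*) [Field E] (F : Subfield E)
    (v : E → ℤ) (ϖ : E) (q : ℕ) (hq : 2 ≤ q)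
    (hϖF : ϖ ∈ F) (hϖ0 : ϖ ≠ 0) (hϖv : v ϖ = 1)
    (hvmul : ∀ x y : E, x ≠ 0 → y ≠ 0 → v (x * y) = v x + v y)
    (hvadd : ∀ x y : E, x ≠ 0 → y ≠ 0 → x + y ≠ 0 → min (v x) (v y) ≤ v (x + y))
    (hodd : (2 : E) ≠ 0 ∧ v 2 = 0)
    (D sqrtD : E) (hDF : D ∈ F) (hD0 : D ≠ 0) (hDv : v D = 0)
    (hDns : ¬ ∃ y ∈ F, y * y = D)
    (hsq : sqrtD * sqrtD = D)
    (hgen : ∀ x : E, ∃ a ∈ F, ∃ b ∈ F, x = a + b * sqrtD)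
    (hinert : ∀ a b : E, a ∈ F → b ∈ F → a ≠ 0 → b ≠ 0 →
        v (a + b * sqrtD) = min (v a) (v b))
    (η₁ η₂ : E → ℂ)
    (hη₁m : ∀ x y : E, x ≠ 0 → y ≠ 0 → η₁ (x * y) = η₁ x * η₁ y)
    (hη₂m : ∀ x y : E, x ≠ 0 → y ≠ 0 → η₂ (x * y) = η₂ x * η₂ y)
    (hη₁u : ∀ x : E, x ≠ 0 → v x = 0 → η₁ x = 1)
    (hη₂u : ∀ x : E, x ≠ 0 → v x = 0 → η₂ x = 1)
    (hη₁0 : ∀ x : E, x ≠ 0 → η₁ x ≠ 0)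
    (hη₂0 : ∀ x : E, x ≠ 0 → η₂ x ≠ 0)
    (Φ : Matrix (Fin 2) (Fin 2) E → ℂ)
    (hΦB : ∀ (b₁ b₂ n : E) (g : Matrix (Fin 2) (Fin 2) E), b₁ ≠ 0 → b₂ ≠ 0 →
        g.det ≠ 0 → Φ (!![b₁, n; 0, b₂] * g) = η₁ b₁ * η₂ b₂ * Φ g)
    (hΦK : ∀ g k : Matrix (Fin 2) (Fin 2) E, g.det ≠ 0 →
        (∀ i j, k i j = 0 ∨ 0 ≤ v (k i j)) → k.det ≠ 0 → v k.det = 0 →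
        Φ (g * k) = Φ g)
    (hΦ1 : Φ 1 = 1) :
    ∀ a₁ a₂ m : E, a₁ ∈ F → a₂ ∈ F → m ∈ F → a₁ ≠ 0 → a₂ ≠ 0 →
      ((a₂ + m * sqrtD = 0 ∨ v (a₁ * sqrtD) ≤ v (a₂ + m * sqrtD)) →
        Φ (!![1, 0; sqrtD, 1] * !![a₁, m; 0, a₂]) =
          η₁ (a₂ / sqrtD) * η₂ (a₁ * sqrtD))
      ∧
      ((a₂ + m * sqrtD ≠ 0 ∧ v (a₂ + m * sqrtD) ≤ v (a₁ * sqrtD)) →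
        Φ (!![1, 0; sqrtD, 1] * !![a₁, m; 0, a₂]) =
          η₁ (a₁ * a₂ / (a₂ + m * sqrtD)) * η₂ (a₂ + m * sqrtD)) :=
  stmt_2_general E F v hvmul D sqrtD hD0 hsq η₁ η₂ Φ hΦB hΦK hΦ1
end

section
/- Let c ≥ 1, α ∈ Fˣ, m ∈ F, and 0 ≤ i, j ≤ c. Set M = [[ϖʲ, 1],[−α−mϖʲ, −m]] (so det M = α and M = ω·[[1,m],[0,1]]·[[α,0],[0,1]]·[[1,0],[ϖʲ,1]] with ω = [[0,1],[−1,0]]). Then M ∈ B(F)·[[1,0],[ϖⁱ,1]]·K₁(ϖᶜ) if and only if the following holds. Case i = 0: if j = 0, m ∉ α·(−1+ϖO); if 0 < j ≤ c, m ∈ αO. Case i = c: if 0 ≤ j < c, m ∈ αϖ^{−j}·(−1+ϖ^{c−j}O); if j = c, m ≠ 0 and α ∈ mϖᶜO. Case 0 < i < c: if 0 ≤ j < i, m ∈ αϖ^{−j}·(−1+ϖ^{i−j}Oˣ); if j = i, m ≠ 0, α ∈ mϖⁱO, and m ∉ αϖ^{−i}·(−1+ϖO); if i < j ≤ c, m ∈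 αϖ^{−i}Oˣ. -/
/-!
A matrix `b · [[1,0],[ϖⁱ,1]] · k` with `b` upper triangular has bottom row in
`Fˣ · (ϖⁱ, 1) · K₁(ϖᶜ)`, and conversely an invertible `M` whose bottom row lies there is of
that form. As `k ∈ K₁(ϖᶜ)` has unit diagonal and `k₁₀ ∈ ϖᶜO`, this orbit of a nonzero row
`(x, y)` is cut out by `v x - v y` alone: it is `≤ 0` for `i = 0`, `= i` for `0 < i < c` and
`≥ c` for `i = c`. For the bottom row `-(α + mϖʲ, m)` of `M`, each case is then a comparison
of `v α`, `v m + j` and `v (α + mϖʲ)`, settled by the ultrametric inequality (the two smallest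
of the three agree); the sets in the statement are read off from `t = (α + mϖʲ) / α`.
Extending `v` by `v 0 = ⊤` to an additive valuation absorbs the many `x = 0 ∨ …` side cases.
-/

section FieldAlgebra

variable {F : Type*} [Field F]

theorem exists_eq_mul_iff {β m : F} (hβ : β ≠ 0) (P : F → Prop) :
    (∃ u, P u ∧ m = β * u) ↔ P (m / β) := by
  have key : ∀ u, m = β * u ↔ u = m / β := fun u => by rw [eq_div_iff hβ, mul_comm, eq_comm]
  simp only [key, exists_eq_right]

theorem exists_eq_mul_inv_mul_neg_one_add_iff {α m W : F} (hα : α ≠ 0) (hW : W ≠ 0)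
    (P : F → Prop) :
    (∃ t, P t ∧ m = α * W⁻¹ * (-1 + t)) ↔ P ((α + m * W) / α) := by
  have key : ∀ t, m = α * W⁻¹ * (-1 + t) ↔ t = (α + m * W) / α := by
    intro t
    rw [eq_div_iff hα]
    constructor <;> intro h
    · rw [h]; field_simp; ring
    · field_simp; linear_combination -h
  simp only [key, exists_eq_right]

open Matrix in
theorem exists_upperTriangular_mul_mul_iff {K : Set (Matrix (Fin 2) (Fin 2) F)}
    (hK : ∀ k ∈ K, IsUnit k.det) {L M : Matrix (Fin 2) (Fin 2) F} (hL : IsUnit L.det)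
    (hM : M.det ≠ 0) :
    (∃ b k : Matrix (Fin 2) (Fin 2) F, b 1 0 = 0 ∧ b.det ≠ 0 ∧ k ∈ K ∧ M = b * L * k) ↔
      ∃ s : F, s ≠ 0 ∧ ∃ k ∈ K, M 1 = s • (L 1 ᵥ* k) := by
  constructor
  · rintro ⟨b, k, hb, hdb, hk, rfl⟩
    rw [det_fin_two, hb, mul_zero, sub_zero] at hdb
    refine ⟨b 1 1, right_ne_zero_of_mul hdb, k, hk, ?_⟩
    ext j
    simp [mul_apply, vecMul, dotProduct, Fin.sum_univ_two, hb, mul_add, mul_assoc]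
  · rintro ⟨s, -, k, hk, hrow⟩
    have hN : IsUnit (L * k).det := by rw [det_mul]; exact hL.mul (hK k hk)
    refine ⟨M * (L * k)⁻¹, k, ?_, ?_, hk, ?_⟩
    · -- the bottom row of `M (L k)⁻¹` is `s` times that of `(L k) (L k)⁻¹ = 1`
      rw [mul_apply_eq_vecMul, hrow, smul_vecMul, vecMul_vecMul, ← mul_apply_eq_vecMul,
        ← mul_assoc, mul_nonsing_inv _ hN]
      simp
    · simp [det_mul, hM, hL.ne_zero, (hK k hk).ne_zero]
    · rw [mul_assoc _ L k, mul_assoc M, nonsing_inv_mul _ hN, mul_one]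

end FieldAlgebra

namespace AddValuation

section Ring

variable {R Γ₀ : Type*} [Ring R] [LinearOrderedAddCommMonoidWithTop Γ₀] (w : AddValuation R Γ₀)

theorem triangle_min_le (x y : R) :
    min (w x) (w y) ≤ w (x + y) ∧ min (w (x + y)) (w y) ≤ w x ∧
      min (w (x + y)) (w x) ≤ w y := by
  refine ⟨w.map_add x y, ?_, ?_⟩
  · simpa using w.map_sub (x + y) y
  · simpa using w.map_sub (x + y) x

end Ring

variable {F : Type*} [Field F] (w : AddValuation F (WithTop ℤ))

theorem map_zpow_of_eq_one {ϖ : F} (hϖ : w ϖ = 1) (n : ℤ) : w (ϖ ^ n) = n := by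
  have hϖ0 : ϖ ≠ 0 := by rintro rfl; simp at hϖ
  induction n using Int.induction_on with
  | zero => simp
  | succ n ih => rw [zpow_add_one₀ hϖ0, map_mul, ih, hϖ]; norm_cast
  | pred n ih => rw [zpow_sub_one₀ hϖ0, map_mul, ih, map_inv, hϖ]; norm_cast

theorem le_map_div_iff {x y : F} (hy : y ≠ 0) (n : WithTop ℤ) :
    n ≤ w (x / y) ↔ n + w y ≤ w x := by
  rw [← WithTop.add_le_add_iff_right (w.ne_top_iff.2 hy), ← map_mul, div_mul_cancel₀ x hy]

theorem map_div_eq_iff {x y : F} (hy : y ≠ 0) (n : WithTop ℤ) :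
    w (x / y) = n ↔ w x = n + w y := by
  rw [← WithTop.add_right_inj (w.ne_top_iff.2 hy), ← map_mul, div_mul_cancel₀ x hy]

variable {w} {ϖ : F}

theorem triangle_min_le_add_mul_zpow (hϖ : w ϖ = 1) (α m : F) (j : ℤ) :
    min (w α) (w m + j) ≤ w (α + m * ϖ ^ j) ∧ min (w (α + m * ϖ ^ j)) (w m + j) ≤ w α ∧
      min (w (α + m * ϖ ^ j)) (w α) ≤ w m + j := by
  simpa [w.map_zpow_of_eq_one hϖ] using w.triangle_min_le α (m * ϖ ^ j)

variable {α m : F} (hα : α ≠ 0)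
include hα

theorem map_add_le_iff_not_exists :
    w (α + m) ≤ w m ↔ ¬ ∃ t, 1 ≤ w t ∧ m = α * (-1 + t) := by
  have key := exists_eq_mul_inv_mul_neg_one_add_iff hα one_ne_zero (m := m) (1 ≤ w ·)
  simp only [inv_one, mul_one] at key
  rw [key, w.le_map_div_iff hα]
  obtain ⟨h1, h2, h3⟩ := w.triangle_min_le α m
  have hA := w.ne_top_iff.2 hα
  generalize w α = A, w m = M, w (α + m) = S at h1 h2 h3 hA ⊢
  induction A <;> induction M <;> induction S <;> simp at h1 h2 h3 hA ⊢
  all_goals norm_cast at h1 h2 h3 ⊢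
  all_goals omega

variable (hϖ : w ϖ = 1)
include hϖ

theorem map_add_mul_zpow_le_iff_of_pos {j : ℤ} (hj : 0 < j) :
    w (α + m * ϖ ^ j) ≤ w m ↔ w α ≤ w m := by
  obtain ⟨h1, h2, h3⟩ := triangle_min_le_add_mul_zpow hϖ α m j
  have hA := w.ne_top_iff.2 hα
  generalize w α = A, w m = M, w (α + m * ϖ ^ j) = S at h1 h2 h3 hA ⊢
  induction A <;> induction M <;> induction S <;> simp at h1 h2 h3 hA ⊢
  all_goals norm_cast at h1 h2 h3 ⊢
  all_goals omega

theorem add_le_map_add_mul_zpow_iff_of_lt {c j : ℤ} (hj : j < c) :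
    w m + c ≤ w (α + m * ϖ ^ j) ↔
      ∃ t, ((c - j : ℤ) : WithTop ℤ) ≤ w t ∧ m = α * ϖ ^ (-j) * (-1 + t) := by
  have hϖ0 : ϖ ≠ 0 := by rintro rfl; simp at hϖ
  simp only [zpow_neg]
  rw [exists_eq_mul_inv_mul_neg_one_add_iff hα (zpow_ne_zero j hϖ0), w.le_map_div_iff hα]
  obtain ⟨h1, h2, h3⟩ := triangle_min_le_add_mul_zpow hϖ α m j
  have hA := w.ne_top_iff.2 hα
  generalize w α = A, w m = M, w (α + m * ϖ ^ j) = S at h1 h2 h3 hA ⊢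
  induction A <;> induction M <;> induction S <;> simp at h1 h2 h3 hA ⊢
  all_goals norm_cast at h1 h2 h3 ⊢
  all_goals omega

theorem add_le_map_add_mul_zpow_self_iff {c : ℤ} :
    w m + c ≤ w (α + m * ϖ ^ c) ↔ w m + c ≤ w α := by
  obtain ⟨h1, h2, h3⟩ := triangle_min_le_add_mul_zpow hϖ α m c
  have hA := w.ne_top_iff.2 hα
  generalize w α = A, w m = M, w (α + m * ϖ ^ c) = S at h1 h2 h3 hA ⊢
  induction A <;> induction M <;> induction S <;> simp at h1 h2 h3 hA ⊢
  all_goals norm_cast at h1 h2 h3 ⊢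
  all_goals omega

theorem map_add_mul_zpow_eq_iff_of_lt {i j : ℤ} (hj : j < i) :
    w (α + m * ϖ ^ j) = w m + i ↔
      ∃ t, w t = ((i - j : ℤ) : WithTop ℤ) ∧ m = α * ϖ ^ (-j) * (-1 + t) := by
  have hϖ0 : ϖ ≠ 0 := by rintro rfl; simp at hϖ
  simp only [zpow_neg]
  rw [exists_eq_mul_inv_mul_neg_one_add_iff hα (zpow_ne_zero j hϖ0), w.map_div_eq_iff hα]
  obtain ⟨h1, h2, h3⟩ := triangle_min_le_add_mul_zpow hϖ α m j
  have hA := w.ne_top_iff.2 hα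
  generalize w α = A, w m = M, w (α + m * ϖ ^ j) = S at h1 h2 h3 hA ⊢
  induction A <;> induction M <;> induction S <;> simp [eq_comm (a := ⊤)] at h1 h2 h3 hA ⊢
  all_goals norm_cast at h1 h2 h3 ⊢
  all_goals omega

theorem map_add_mul_zpow_self_eq_iff {i : ℤ} :
    w (α + m * ϖ ^ i) = w m + i ↔
      w m + i ≤ w α ∧ ¬ ∃ t, 1 ≤ w t ∧ m = α * ϖ ^ (-i) * (-1 + t) := by
  have hϖ0 : ϖ ≠ 0 := by rintro rfl; simp at hϖ
  simp only [zpow_neg]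
  rw [exists_eq_mul_inv_mul_neg_one_add_iff hα (zpow_ne_zero i hϖ0), w.le_map_div_iff hα]
  obtain ⟨h1, h2, h3⟩ := triangle_min_le_add_mul_zpow hϖ α m i
  have hA := w.ne_top_iff.2 hα
  generalize w α = A, w m = M, w (α + m * ϖ ^ i) = S at h1 h2 h3 hA ⊢
  induction A <;> induction M <;> induction S <;> simp [eq_comm (a := ⊤)] at h1 h2 h3 hA ⊢
  all_goals norm_cast at h1 h2 h3 ⊢
  all_goals omega

theorem map_add_mul_zpow_eq_iff_of_gt {i j : ℤ} (hj : i < j) :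
    w (α + m * ϖ ^ j) = w m + i ↔ ∃ u, w u = 0 ∧ m = α * ϖ ^ (-i) * u := by
  have hϖ0 : ϖ ≠ 0 := by rintro rfl; simp at hϖ
  have hαϖ : α * ϖ ^ (-i) ≠ 0 := mul_ne_zero hα (zpow_ne_zero _ hϖ0)
  rw [exists_eq_mul_iff hαϖ, w.map_div_eq_iff hαϖ, w.map_mul, w.map_zpow_of_eq_one hϖ]
  obtain ⟨h1, h2, h3⟩ := triangle_min_le_add_mul_zpow hϖ α m j
  have hA := w.ne_top_iff.2 hα
  generalize w α = A, w m = M, w (α + m * ϖ ^ j) = S at h1 h2 h3 hA ⊢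
  induction A <;> induction M <;> induction S <;> simp [eq_comm (a := ⊤)] at h1 h2 h3 hA ⊢
  all_goals norm_cast at h1 h2 h3 ⊢
  all_goals omega

end AddValuation

namespace BorelK₁

open Matrix

variable {F : Type*} [Field F] (w : AddValuation F (WithTop ℤ))

def K₁ (c : ℤ) : Set (Matrix (Fin 2) (Fin 2) F) :=
  {k | (∀ a b, 0 ≤ w (k a b)) ∧ w k.det = 0 ∧ (c : WithTop ℤ) ≤ w (k 1 0) ∧
    (c : WithTop ℤ) ≤ w (k 1 1 - 1)}

def RowOrbit (ϖ : F) (c i : ℤ) (r : Fin 2 → F) : Prop :=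
  ∃ s : F, s ≠ 0 ∧ ∃ k ∈ K₁ w c, r = s • (![ϖ ^ i, 1] ᵥ* k)

variable {w} {c i : ℤ} {ϖ : F} {k : Matrix (Fin 2) (Fin 2) F}

theorem isUnit_det_of_mem_K₁ (hk : k ∈ K₁ w c) : IsUnit k.det :=
  isUnit_iff_ne_zero.2 <| w.ne_top_iff.1 (by rw [hk.2.1]; exact WithTop.coe_ne_top)

theorem mem_K₁_of_iff (a b d e : F) :
    !![a, b; d, e] ∈ K₁ w c ↔ 0 ≤ w a ∧ 0 ≤ w b ∧ 0 ≤ w d ∧ 0 ≤ w e ∧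
      w (a * e - b * d) = 0 ∧ (c : WithTop ℤ) ≤ w d ∧ (c : WithTop ℤ) ≤ w (e - 1) := by
  simp [K₁, Fin.forall_fin_two, det_fin_two_of, and_assoc]

theorem map_diag_of_mem_K₁ (hc : 1 ≤ c) (hk : k ∈ K₁ w c) :
    w (k 0 0) = 0 ∧ w (k 1 1) = 0 := by
  obtain ⟨hint, hdet, h10, h11⟩ := hk
  have hc0 : (0 : WithTop ℤ) < c := by exact_mod_cast hc
  have hk11 : w (k 1 1) = 0 := by
    have h : w 1 < w (k 1 1 - 1) := w.map_one ▸ hc0.trans_le h11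
    rw [← add_sub_cancel (1 : F) (k 1 1), w.map_add_eq_of_lt_left h, w.map_one]
  refine ⟨?_, hk11⟩
  rw [det_fin_two] at hdet
  have hoff : w (k 0 0 * k 1 1 - k 0 1 * k 1 0) < w (k 0 1 * k 1 0) := by
    rw [hdet, w.map_mul]
    exact hc0.trans_le (h10.trans (le_add_of_nonneg_left (hint 0 1)))
  have := w.map_add_eq_of_lt_left hoff
  rwa [sub_add_cancel, hdet, w.map_mul, hk11, add_zero] at this

theorem map_zpow_mul_add_of_lt (hϖ : w ϖ = 1) (hc : 1 ≤ c) (hk : k ∈ K₁ w c) (hic : i < c) :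
    w (ϖ ^ i * k 0 0 + k 1 0) = i := by
  have hX : w (ϖ ^ i * k 0 0) = i := by
    rw [w.map_mul, (map_diag_of_mem_K₁ hc hk).1, add_zero, w.map_zpow_of_eq_one hϖ]
  rw [w.map_add_eq_of_lt_left (hX ▸ (WithTop.coe_lt_coe.2 hic).trans_le hk.2.2.1), hX]

theorem map_zpow_mul_add_of_pos (hϖ : w ϖ = 1) (hc : 1 ≤ c) (hk : k ∈ K₁ w c) (hi : 0 < i) :
    w (ϖ ^ i * k 0 1 + k 1 1) = 0 := by
  have hk11 := (map_diag_of_mem_K₁ hc hk).2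
  have h : w (k 1 1) < w (ϖ ^ i * k 0 1) := by
    rw [hk11, w.map_mul, w.map_zpow_of_eq_one hϖ]
    exact (WithTop.coe_pos.2 hi).trans_le (le_add_of_nonneg_right (hk.1 0 1))
  rw [w.map_add_eq_of_lt_right h, hk11]

theorem rowOrbit_pair_iff {x y : F} :
    RowOrbit w ϖ c i ![x, y] ↔ ∃ s : F, s ≠ 0 ∧ ∃ k ∈ K₁ w c,
      x = s * (ϖ ^ i * k 0 0 + k 1 0) ∧ y = s * (ϖ ^ i * k 0 1 + k 1 1) := by
  simp [RowOrbit, funext_iff, Fin.forall_fin_two, vecMul, dotProduct, Fin.sum_univ_two]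

variable {x y : F}

theorem rowOrbit_zero_iff (hϖ : w ϖ = 1) (hc : 1 ≤ c) (hxy : x ≠ 0 ∨ y ≠ 0) :
    RowOrbit w ϖ c 0 ![x, y] ↔ w x ≤ w y := by
  rw [rowOrbit_pair_iff]
  constructor
  · rintro ⟨s, -, k, hk, rfl, rfl⟩
    have hX := map_zpow_mul_add_of_lt hϖ hc hk (by omega : (0 : ℤ) < c)
    have hY : 0 ≤ w (ϖ ^ (0 : ℤ) * k 0 1 + k 1 1) := by
      rw [zpow_zero, one_mul]; exact w.map_le_add (hk.1 0 1) (hk.1 1 1)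
    rw [w.map_mul, w.map_mul, hX, WithTop.coe_zero, add_zero]
    exact le_add_of_nonneg_right hY
  · intro hle
    have hx : x ≠ 0 := by
      rintro rfl
      rw [w.map_zero, top_le_iff, w.top_iff] at hle
      simp [hle] at hxy
    refine ⟨x, hx, !![1, y / x - 1; 0, 1], ?_, by simp, by simp [mul_div_cancel₀ y hx]⟩
    have hyx : 0 ≤ w (y / x - 1) :=
      w.map_le_sub (by rwa [w.le_map_div_iff hx, zero_add]) (by simp)
    simp [mem_K₁_of_iff, hyx]

theorem rowOrbit_iff_of_pos_of_lt (hϖ : w ϖ = 1) (hi : 0 < i) (hic : i < c)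
    (hxy : x ≠ 0 ∨ y ≠ 0) :
    RowOrbit w ϖ c i ![x, y] ↔ w x = w y + i := by
  rw [rowOrbit_pair_iff]
  constructor
  · rintro ⟨s, -, k, hk, rfl, rfl⟩
    rw [w.map_mul, w.map_mul, map_zpow_mul_add_of_lt hϖ (by omega) hk hic,
      map_zpow_mul_add_of_pos hϖ (by omega) hk hi, add_zero]
  · intro heq
    have hy : y ≠ 0 := by
      rintro rfl
      rw [w.map_zero, top_add, w.top_iff] at heq
      simp [heq] at hxy
    have hϖi : ϖ ^ i ≠ 0 := by rw [← w.ne_top_iff, w.map_zpow_of_eq_one hϖ]; simp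
    refine ⟨y, hy, !![x / (y * ϖ ^ i), 0; 0, 1], ?_, by simp; field_simp, by simp⟩
    have hk : w (x / (y * ϖ ^ i)) = 0 := by
      rw [w.map_div_eq_iff (mul_ne_zero hy hϖi), zero_add, w.map_mul,
        w.map_zpow_of_eq_one hϖ, heq]
    simp [mem_K₁_of_iff, hk]

theorem rowOrbit_self_iff (hϖ : w ϖ = 1) (hc : 1 ≤ c) (hxy : x ≠ 0 ∨ y ≠ 0) :
    RowOrbit w ϖ c c ![x, y] ↔ w y + c ≤ w x := by
  rw [rowOrbit_pair_iff]
  constructor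
  · rintro ⟨s, -, k, hk, rfl, rfl⟩
    have hX : (c : WithTop ℤ) ≤ w (ϖ ^ c * k 0 0 + k 1 0) := by
      refine w.map_le_add ?_ hk.2.2.1
      rw [w.map_mul, (map_diag_of_mem_K₁ hc hk).1, add_zero, w.map_zpow_of_eq_one hϖ]
    rw [w.map_mul, w.map_mul, map_zpow_mul_add_of_pos hϖ hc hk (by omega), add_zero]
    gcongr
  · intro hle
    have hy : y ≠ 0 := by
      rintro rfl
      rw [w.map_zero, top_add, top_le_iff, w.top_iff] at hle
      simp [hle] at hxy
    have hk : (c : WithTop ℤ) ≤ w (x / y - ϖ ^ c) :=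
      w.map_le_sub (by rwa [w.le_map_div_iff hy, add_comm]) (w.map_zpow_of_eq_one hϖ _).ge
    have hc0 : (0 : WithTop ℤ) ≤ c := by exact_mod_cast (by omega : (0 : ℤ) ≤ c)
    refine ⟨y, hy, !![1, 0; x / y - ϖ ^ c, 1], ?_, by simp [mul_div_cancel₀ x hy], by simp⟩
    simp [mem_K₁_of_iff, hk, hc0.trans hk]

theorem rowOrbit_neg_iff {r : Fin 2 → F} : RowOrbit w ϖ c i (-r) ↔ RowOrbit w ϖ c i r := by
  constructor <;> rintro ⟨s, hs, k, hk, hr⟩ <;> refine ⟨-s, neg_ne_zero.2 hs, k, hk, ?_⟩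
  · rw [neg_smul, ← hr, neg_neg]
  · rw [neg_smul, ← hr]

theorem exists_mul_mul_iff_rowOrbit {α m : F} (hα : α ≠ 0) {j : ℤ} :
    (∃ b k : Matrix (Fin 2) (Fin 2) F, b 1 0 = 0 ∧ b.det ≠ 0 ∧ k ∈ K₁ w c ∧
        !![ϖ ^ j, 1; -α - m * ϖ ^ j, -m] = b * !![1, 0; ϖ ^ i, 1] * k) ↔
      RowOrbit w ϖ c i ![α + m * ϖ ^ j, m] := by
  have hM : (!![ϖ ^ j, 1; -α - m * ϖ ^ j, -m]).det ≠ 0 := by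
    rw [det_fin_two_of]; ring_nf; exact hα
  have hrow : (!![ϖ ^ j, 1; -α - m * ϖ ^ j, -m]) 1 = -![α + m * ϖ ^ j, m] := by
    ext a; fin_cases a <;> simp; ring
  rw [exists_upperTriangular_mul_mul_iff (fun _ => isUnit_det_of_mem_K₁) (by simp) hM, hrow,
    ← rowOrbit_neg_iff]
  rfl

end BorelK₁

section IntValued

variable {F : Type*} [Field F] (v : F → ℤ)
  (hvmul : ∀ x y : F, x ≠ 0 → y ≠ 0 → v (x * y) = v x + v y)
  (hvadd : ∀ x y : F, x ≠ 0 → y ≠ 0 → x + y ≠ 0 → min (v x) (v y) ≤ v (x + y))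

open Classical in
noncomputable def addValuationOfInt : AddValuation F (WithTop ℤ) :=
  AddValuation.of (fun x => if x = 0 then ⊤ else (v x : WithTop ℤ)) (if_pos rfl)
    (by
      have h1 : v 1 = 0 := by
        have := hvmul 1 1 one_ne_zero one_ne_zero
        rw [mul_one] at this
        omega
      simp [h1])
    (by
      intro x y
      by_cases hx : x = 0; · simp [hx]
      by_cases hy : y = 0; · simp [hy]
      by_cases hxy : x + y = 0; · simp [hxy]
      simp only [hx, hy, hxy, if_false]
      exact_mod_cast hvadd x y hx hy hxy)
    (by
      intro x y
      by_cases hx : x = 0; · simp [hx]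
      by_cases hy : y = 0; · simp [hy]
      simp only [hx, hy, mul_eq_zero, or_self, if_false]
      exact_mod_cast hvmul x y hx hy)

variable {v hvmul hvadd} {x y : F}

theorem addValuationOfInt_of_ne_zero (hx : x ≠ 0) : addValuationOfInt v hvmul hvadd x = v x :=
  if_neg hx

theorem coe_le_addValuationOfInt_iff {n : ℤ} :
    (n : WithTop ℤ) ≤ addValuationOfInt v hvmul hvadd x ↔ x = 0 ∨ n ≤ v x := by
  by_cases hx : x = 0 <;> simp [addValuationOfInt_of_ne_zero, hx]

theorem addValuationOfInt_eq_coe_iff {n : ℤ} :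
    addValuationOfInt v hvmul hvadd x = n ↔ x ≠ 0 ∧ v x = n := by
  by_cases hx : x = 0 <;> simp [addValuationOfInt_of_ne_zero, hx]

theorem addValuationOfInt_add_coe_le_iff (hy : y ≠ 0) {n : ℤ} :
    addValuationOfInt v hvmul hvadd x + n ≤ addValuationOfInt v hvmul hvadd y ↔
      x ≠ 0 ∧ v x + n ≤ v y := by
  rcases eq_or_ne x 0 with rfl | hx
  · simp [addValuationOfInt_of_ne_zero hy]
  · rw [addValuationOfInt_of_ne_zero hx, addValuationOfInt_of_ne_zero hy, ← WithTop.coe_add,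
      WithTop.coe_le_coe, and_iff_right hx]

theorem mem_K₁_addValuationOfInt_iff {c : ℤ} {k : Matrix (Fin 2) (Fin 2) F} :
    k ∈ BorelK₁.K₁ (addValuationOfInt v hvmul hvadd) c ↔
      (∀ a b, k a b = 0 ∨ 0 ≤ v (k a b)) ∧ k.det ≠ 0 ∧ v k.det = 0 ∧
        (k 1 0 = 0 ∨ c ≤ v (k 1 0)) ∧ (k 1 1 - 1 = 0 ∨ c ≤ v (k 1 1 - 1)) := by
  simp only [BorelK₁.K₁, Set.mem_ofPred_eq, ← WithTop.coe_zero, coe_le_addValuationOfInt_iff,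
    addValuationOfInt_eq_coe_iff, and_assoc]

end IntValued

theorem stmt_8_general
    (F : Type*) [Field F]
    (v : F → ℤ) (ϖ : F)
    (hϖ0 : ϖ ≠ 0) (hϖv : v ϖ = 1)
    (hvmul : ∀ x y : F, x ≠ 0 → y ≠ 0 → v (x * y) = v x + v y)
    (hvadd : ∀ x y : F, x ≠ 0 → y ≠ 0 → x + y ≠ 0 → min (v x) (v y) ≤ v (x + y))
    (c i j : ℤ) (hc : 1 ≤ c)
    (α m : F) (hα : α ≠ 0) :
    ∀ mem : Prop,
      (mem ↔ ∃ b k : Matrix (Fin 2) (Fin 2) F,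
        b 1 0 = 0 ∧ b.det ≠ 0 ∧
        (∀ i' j', k i' j' = 0 ∨ 0 ≤ v (k i' j')) ∧ k.det ≠ 0 ∧ v k.det = 0 ∧
        (k 1 0 = 0 ∨ c ≤ v (k 1 0)) ∧ (k 1 1 - 1 = 0 ∨ c ≤ v (k 1 1 - 1)) ∧
        !![ϖ ^ j, 1; -α - m * ϖ ^ j, -m] = b * !![1, 0; ϖ ^ i, 1] * k) →
      ((i = 0 → j = 0 →
          (mem ↔ ¬ ∃ t : F, (t = 0 ∨ 1 ≤ v t) ∧ m = α * (-1 + t))) ∧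
       (i = 0 → 0 < j →
          (mem ↔ (m = 0 ∨ v α ≤ v m))) ∧
       (i = c → j < c →
          (mem ↔ ∃ t : F, (t = 0 ∨ c - j ≤ v t) ∧ m = α * ϖ ^ (-j) * (-1 + t))) ∧
       (i = c → j = c →
          (mem ↔ (m ≠ 0 ∧ v m ≤ v α - c))) ∧
       (0 < i → i < c → j < i →
          (mem ↔ ∃ t : F, t ≠ 0 ∧ v t = i - j ∧ m = α * ϖ ^ (-j) * (-1 + t))) ∧
       (0 < i → i < c → j = i →
          (mem ↔ (m ≠ 0 ∧ v m ≤ v α - i ∧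
            ¬ ∃ t : F, (t = 0 ∨ 1 ≤ v t) ∧ m = α * ϖ ^ (-i) * (-1 + t)))) ∧
       (0 < i → i < c → i < j →
          (mem ↔ ∃ u : F, u ≠ 0 ∧ v u = 0 ∧ m = α * ϖ ^ (-i) * u))) := by
  intro mem hmem
  set w := addValuationOfInt v hvmul hvadd
  have hϖ : w ϖ = 1 := by simp [w, addValuationOfInt_of_ne_zero hϖ0, hϖv]
  have hrow : mem ↔ BorelK₁.RowOrbit w ϖ c i ![α + m * ϖ ^ j, m] := by
    rw [hmem, ← BorelK₁.exists_mul_mul_iff_rowOrbit hα]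
    simp only [w, mem_K₁_addValuationOfInt_iff, and_assoc]
  have hxy : α + m * ϖ ^ j ≠ 0 ∨ m ≠ 0 := (eq_or_ne m 0).imp_left fun hm => by simpa [hm]
  rw [hrow]
  refine ⟨fun hi hj => ?_, fun hi hj => ?_, fun hi hj => ?_, fun hi hj => ?_,
    fun hi hic hj => ?_, fun hi hic hj => ?_, fun hi hic hj => ?_⟩
  · subst hi hj
    rw [BorelK₁.rowOrbit_zero_iff hϖ hc hxy, zpow_zero, mul_one, w.map_add_le_iff_not_exists hα]
    simp only [w, ← WithTop.coe_one, coe_le_addValuationOfInt_iff]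
  · subst hi
    rw [BorelK₁.rowOrbit_zero_iff hϖ hc hxy, w.map_add_mul_zpow_le_iff_of_pos hα hϖ hj,
      addValuationOfInt_of_ne_zero hα, coe_le_addValuationOfInt_iff]
  · subst hi
    rw [BorelK₁.rowOrbit_self_iff hϖ hc hxy, w.add_le_map_add_mul_zpow_iff_of_lt hα hϖ hj]
    simp only [w, coe_le_addValuationOfInt_iff]
  · subst hi hj
    rw [BorelK₁.rowOrbit_self_iff hϖ hc hxy, w.add_le_map_add_mul_zpow_self_iff hα hϖ,
      addValuationOfInt_add_coe_le_iff hα, le_sub_iff_add_le]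
  · rw [BorelK₁.rowOrbit_iff_of_pos_of_lt hϖ hi hic hxy, w.map_add_mul_zpow_eq_iff_of_lt hα hϖ hj]
    simp only [w, addValuationOfInt_eq_coe_iff, and_assoc]
  · subst hj
    rw [BorelK₁.rowOrbit_iff_of_pos_of_lt hϖ hi hic hxy, w.map_add_mul_zpow_self_eq_iff hα hϖ]
    simp only [w, addValuationOfInt_add_coe_le_iff hα, le_sub_iff_add_le, ← WithTop.coe_one,
      coe_le_addValuationOfInt_iff, and_assoc]
  · rw [BorelK₁.rowOrbit_iff_of_pos_of_lt hϖ hi hic hxy, w.map_add_mul_zpow_eq_iff_of_gt hα hϖ hj]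
    simp only [w, ← WithTop.coe_zero, addValuationOfInt_eq_coe_iff, and_assoc]

/-- The Iwasawa-type position of
`M = [[ϖʲ, 1],[−α−mϖʲ, −m]] = ω·[[1,m],[0,1]]·[[α,0],[0,1]]·[[1,0],[ϖʲ,1]]` relative to
the decomposition `GL₂(F) = ⨿_{0≤i≤c} B(F)·[[1,0],[ϖⁱ,1]]·K₁(ϖᶜ)`:
`M ∈ B(F)·[[1,0],[ϖⁱ,1]]·K₁(ϖᶜ)` iff the stated case-by-case condition on `m` holds. -/
theorem stmt_8
    (F : Type*) [Field F]
    (v : F → ℤ) (ϖ : F)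
    (hϖ0 : ϖ ≠ 0) (hϖv : v ϖ = 1)
    (hvmul : ∀ x y : F, x ≠ 0 → y ≠ 0 → v (x * y) = v x + v y)
    (hvadd : ∀ x y : F, x ≠ 0 → y ≠ 0 → x + y ≠ 0 → min (v x) (v y) ≤ v (x + y))
    (c i j : ℤ) (hc : 1 ≤ c)
    (hi0 : 0 ≤ i) (hic : i ≤ c) (hj0 : 0 ≤ j) (hjc : j ≤ c)
    (α m : F) (hα : α ≠ 0) :
    ∀ mem : Prop,
      (mem ↔ ∃ b k : Matrix (Fin 2) (Fin 2) F,
        b 1 0 = 0 ∧ b.det ≠ 0 ∧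
        (∀ i' j', k i' j' = 0 ∨ 0 ≤ v (k i' j')) ∧ k.det ≠ 0 ∧ v k.det = 0 ∧
        (k 1 0 = 0 ∨ c ≤ v (k 1 0)) ∧ (k 1 1 - 1 = 0 ∨ c ≤ v (k 1 1 - 1)) ∧
        !![ϖ ^ j, 1; -α - m * ϖ ^ j, -m] = b * !![1, 0; ϖ ^ i, 1] * k) →
      ((i = 0 → j = 0 →
          (mem ↔ ¬ ∃ t : F, (t = 0 ∨ 1 ≤ v t) ∧ m = α * (-1 + t))) ∧
       (i = 0 → 0 < j →
          (mem ↔ (m = 0 ∨ v α ≤ v m))) ∧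
       (i = c → j < c →
          (mem ↔ ∃ t : F, (t = 0 ∨ c - j ≤ v t) ∧ m = α * ϖ ^ (-j) * (-1 + t))) ∧
       (i = c → j = c →
          (mem ↔ (m ≠ 0 ∧ v m ≤ v α - c))) ∧
       (0 < i → i < c → j < i →
          (mem ↔ ∃ t : F, t ≠ 0 ∧ v t = i - j ∧ m = α * ϖ ^ (-j) * (-1 + t))) ∧
       (0 < i → i < c → j = i →
          (mem ↔ (m ≠ 0 ∧ v m ≤ v α - i ∧
            ¬ ∃ t : F, (t = 0 ∨ 1 ≤ v t) ∧ m = α * ϖ ^ (-i) * (-1 + t)))) ∧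
       (0 < i → i < c → i < j →
          (mem ↔ ∃ u : F, u ≠ 0 ∧ v u = 0 ∧ m = α * ϖ ^ (-i) * u))) :=
  stmt_8_general F v ϖ hϖ0 hϖv hvmul hvadd c i j hc α m hα
end

section
/- Let E = F(√D) be the unramified quadratic extension of F and let χ be a quasi-character of Eˣ of level c ≥ 1 (trivial on 1+ϖᶜO_E, nontrivial on 1+ϖ^{c−1}O_E, with 1+ϖ⁰O_E meaning O_Eˣ) whose restriction to Fˣ is unramified (trivial on Oˣ). Since χ is trivial on 1+ϖᶜO_E, the functions b ↦ χ(1+b√D) and b ↦ χ(√D+b) on O_F descend to the finite quotient O_F/ϖᶜO_F. If c ≥ 2, then for 0 ≤ i ≤ c: Σ_{b ∈ O_F/ϖᶜO_F, v(b)=i} χ(1+b√D) equals 1 if i = c (the single term b = 0), equals −1 if i = c−1, and equals 0 if 0 ≤ i ≤ c−2; likewise Σ_{b ∈ O_F/ϖᶜO_F, v(b)=i} χ(√D+b) equals χ(√D) if i = c, −χ(√D) if i = c−1, and 0 if 0 ≤ i ≤ c−2. If c = 1, then Σ_{b ∈ O_F/ϖO_F} χ(1+b√D) + χ(√D) = 0.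 -/
/-!
Each sum reduces to a sum of `χ` over elements of `O_Eˣ` representing distinct classes
modulo `H = O_Fˣ (1 + 𝔭ᶜ)`, on which `χ` is trivial. If such a family is carried into itself,
class by class, by multiplication with a unit `u`, its `χ`-sum is multiplied by `χ u`, hence
vanishes when `χ u ≠ 1`.

For `c ≥ 2` and `i ≤ c - 1`, the elements `1 + ρ√D` with `v ρ ≥ i` form such a family for
`u = 1 + t√D`, where `v t ≥ c - 1` and `χ u ≠ 1`, because
`(1 + t√D)(1 + ρ√D) = (1 + ρtD)(1 + (ρ + t)/(1 + ρtD) √D)` with `1 + ρtD ∈ O_Fˣ`.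
The sum over `v ρ = i` is the difference of the sums over `v ρ ≥ i` and `v ρ ≥ i + 1`, and the
sum over `v ρ ≥ c` is the single term `1`. The second sums reduce to the first through
`√D + ρ = √D (1 + ρD⁻¹√D)`, as `ρ ↦ ρD⁻¹` carries one system of residues to another.

For `c = 1`, the elements `1 + ρ√D` together with `√D` represent all of `O_Eˣ / H`
(the projective line over the residue field), and `u` is any unit with `χ u ≠ 1`.
-/

open scoped Classical

namespace UnramifiedCharSum

structure IntValuation (E : Type*) [Field E] where
  v : E → ℤ
  v_mul : ∀ x y : E, x ≠ 0 → y ≠ 0 → v (x * y) = v x + v y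
  min_le_v_add : ∀ x y : E, x ≠ 0 → y ≠ 0 → x + y ≠ 0 → min (v x) (v y) ≤ v (x + y)

namespace IntValuation

variable {E : Type*} [Field E] (V : IntValuation E)

theorem v_one : V.v 1 = 0 := by
  have := V.v_mul 1 1 one_ne_zero one_ne_zero
  rw [mul_one] at this
  omega

theorem v_neg {x : E} (hx : x ≠ 0) : V.v (-x) = V.v x := by
  have h := V.v_mul (-1) (-1) (by simp) (by simp)
  rw [neg_one_mul, neg_neg, V.v_one] at h
  rw [neg_eq_neg_one_mul, V.v_mul _ _ (by simp) hx]
  omega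

theorem v_inv {x : E} (hx : x ≠ 0) : V.v x⁻¹ = -V.v x := by
  have := V.v_mul x x⁻¹ hx (inv_ne_zero hx)
  rw [mul_inv_cancel₀ hx, V.v_one] at this
  omega

/-- The fractional ideal `𝔭ⁿ = {x | v x ≥ n}`; `0` is put in explicitly since `v 0` is junk. -/
def ball (n : ℤ) : AddSubgroup E where
  carrier := {x | x = 0 ∨ n ≤ V.v x}
  zero_mem' := Or.inl rfl
  add_mem' := by
    intro x y hx hy
    by_cases hx0 : x = 0
    · simpa [hx0] using hy
    by_cases hy0 : y = 0
    · simpa [hy0] using hx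
    by_cases hxy : x + y = 0
    · exact Or.inl hxy
    have := V.min_le_v_add x y hx0 hy0 hxy
    exact Or.inr (le_min (hx.resolve_left hx0) (hy.resolve_left hy0) |>.trans this)
  neg_mem' := by
    rintro x (hx | hx)
    · simp [hx]
    · by_cases hx0 : x = 0
      · simp [hx0]
      · exact Or.inr (by rw [V.v_neg hx0]; exact hx)

theorem mem_ball {n : ℤ} {x : E} : x ∈ V.ball n ↔ x = 0 ∨ n ≤ V.v x := Iff.rfl

theorem ball_anti {m n : ℤ} (h : m ≤ n) : V.ball n ≤ V.ball m :=
  fun _ hx => hx.imp id h.trans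

theorem mul_mem_ball {m n : ℤ} {x y : E} (hx : x ∈ V.ball m) (hy : y ∈ V.ball n) :
    x * y ∈ V.ball (m + n) := by
  by_cases hx0 : x = 0
  · simp [hx0]
  by_cases hy0 : y = 0
  · simp [hy0]
  rw [mem_ball, V.v_mul x y hx0 hy0]
  exact Or.inr (add_le_add (hx.resolve_left hx0) (hy.resolve_left hy0))

def IsIntegralUnit (u : E) : Prop := u ≠ 0 ∧ V.v u = 0

variable {V}

theorem isIntegralUnit_one : V.IsIntegralUnit 1 := ⟨one_ne_zero, V.v_one⟩

theorem IsIntegralUnit.mem_ball_zero {u : E} (hu : V.IsIntegralUnit u) : u ∈ V.ball 0 :=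
  Or.inr hu.2.ge

theorem IsIntegralUnit.mul {u w : E} (hu : V.IsIntegralUnit u) (hw : V.IsIntegralUnit w) :
    V.IsIntegralUnit (u * w) :=
  ⟨mul_ne_zero hu.1 hw.1, by rw [V.v_mul u w hu.1 hw.1, hu.2, hw.2, add_zero]⟩

theorem IsIntegralUnit.inv {u : E} (hu : V.IsIntegralUnit u) : V.IsIntegralUnit u⁻¹ :=
  ⟨inv_ne_zero hu.1, by rw [V.v_inv hu.1, hu.2, neg_zero]⟩

theorem mul_mem_ball_of_isIntegralUnit {n : ℤ} {x u : E} (hx : x ∈ V.ball n)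
    (hu : V.IsIntegralUnit u) : x * u ∈ V.ball n := by
  simpa using V.mul_mem_ball hx hu.mem_ball_zero

theorem div_mem_ball_of_isIntegralUnit {n : ℤ} {x u : E} (hx : x ∈ V.ball n)
    (hu : V.IsIntegralUnit u) : x / u ∈ V.ball n := by
  rw [div_eq_mul_inv]; exact mul_mem_ball_of_isIntegralUnit hx hu.inv

theorem v_add_eq_of_lt {n : ℤ} {x y : E} (hx : x ≠ 0) (hxn : V.v x < n) (hy : y ∈ V.ball n) :
    x + y ≠ 0 ∧ V.v (x + y) = V.v x := by
  by_cases hy0 : y = 0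
  · simp [hy0, hx]
  have hyn : n ≤ V.v y := hy.resolve_left hy0
  have hxy : x + y ≠ 0 := fun h => by
    rw [eq_neg_of_add_eq_zero_left h, V.v_neg hy0] at hxn
    omega
  have h₁ := V.min_le_v_add x y hx hy0 hxy
  have h₂ := V.min_le_v_add (x + y) (-y) hxy (neg_ne_zero.mpr hy0) (by simpa using hx)
  rw [add_neg_cancel_right, V.v_neg hy0] at h₂
  exact ⟨hxy, by omega⟩

theorem IsIntegralUnit.add_of_mem_ball {u y : E} (hu : V.IsIntegralUnit u)
    (hy : y ∈ V.ball 1) : V.IsIntegralUnit (u + y) := by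
  have := v_add_eq_of_lt hu.1 (by rw [hu.2]; omega) hy
  exact ⟨this.1, this.2.trans hu.2⟩

theorem mul_mem_ball_iff_of_isIntegralUnit {n : ℤ} {x u : E} (hu : V.IsIntegralUnit u) :
    x * u ∈ V.ball n ↔ x ∈ V.ball n :=
  ⟨fun h => by simpa [hu.1] using div_mem_ball_of_isIntegralUnit h hu,
    fun h => mul_mem_ball_of_isIntegralUnit h hu⟩

theorem mem_ball_one_of_not_isIntegralUnit {x : E} (hx : x ∈ V.ball 0)
    (hxu : ¬V.IsIntegralUnit x) : x ∈ V.ball 1 := by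
  by_cases hx0 : x = 0
  · exact Or.inl hx0
  have : V.v x ≠ 0 := fun h => hxu ⟨hx0, h⟩
  exact Or.inr (by have := hx.resolve_left hx0; omega)

end IntValuation

structure UnramifiedExt (E : Type*) [Field E] extends IntValuation E where
  F : Subfield E
  D : E
  sqrtD : E
  D_mem : D ∈ F
  D_ne_zero : D ≠ 0
  v_D : v D = 0
  not_exists_mul_self_eq_D : ¬ ∃ y ∈ F, y * y = D
  sqrtD_mul_self : sqrtD * sqrtD = D
  v_add_mul_sqrtD : ∀ a b : E, a ∈ F → b ∈ F → a ≠ 0 → b ≠ 0 →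
    v (a + b * sqrtD) = min (v a) (v b)

namespace UnramifiedExt

open IntValuation

variable {E : Type*} [Field E] (K : UnramifiedExt E)

theorem sqrtD_ne_zero : K.sqrtD ≠ 0 := fun h =>
  K.D_ne_zero (by rw [← K.sqrtD_mul_self, h, mul_zero])

theorem isIntegralUnit_D : K.IsIntegralUnit K.D := ⟨K.D_ne_zero, K.v_D⟩

theorem isIntegralUnit_sqrtD : K.IsIntegralUnit K.sqrtD := by
  refine ⟨K.sqrtD_ne_zero, ?_⟩
  have := K.v_mul _ _ K.sqrtD_ne_zero K.sqrtD_ne_zero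
  rw [K.sqrtD_mul_self, K.v_D] at this
  omega

theorem add_mul_sqrtD_ne_zero {a b : E} (ha : a ∈ K.F) (hb : b ∈ K.F) (hab : a ≠ 0 ∨ b ≠ 0) :
    a + b * K.sqrtD ≠ 0 := by
  intro h
  by_cases hb0 : b = 0
  · simp_all
  refine K.not_exists_mul_self_eq_D ⟨-(a / b), K.F.neg_mem (K.F.div_mem ha hb), ?_⟩
  have hs : K.sqrtD = -(a / b) := by
    field_simp
    linear_combination h
  rw [← hs, K.sqrtD_mul_self]

theorem add_mul_sqrtD_mem_ball_iff {a b : E} (ha : a ∈ K.F) (hb : b ∈ K.F) {n : ℤ} :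
    a + b * K.sqrtD ∈ K.ball n ↔ a ∈ K.ball n ∧ b ∈ K.ball n := by
  refine ⟨fun h => ?_, fun ⟨ha', hb'⟩ =>
    add_mem ha' (mul_mem_ball_of_isIntegralUnit hb' K.isIntegralUnit_sqrtD)⟩
  by_cases hb0 : b = 0
  · simp_all
  have hne := K.add_mul_sqrtD_ne_zero ha hb (Or.inr hb0)
  replace h := h.resolve_left hne
  by_cases ha0 : a = 0
  · rw [ha0, zero_add, K.v_mul _ _ hb0 K.sqrtD_ne_zero, K.isIntegralUnit_sqrtD.2] at h
    exact ⟨Or.inl ha0, Or.inr (by omega)⟩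
  rw [K.v_add_mul_sqrtD a b ha hb ha0 hb0] at h
  exact ⟨Or.inr (by omega), Or.inr (by omega)⟩

theorem isIntegralUnit_add_mul_sqrtD_iff {a b : E} (ha : a ∈ K.F) (hb : b ∈ K.F)
    (ha' : a ∈ K.ball 0) (hb' : b ∈ K.ball 0) :
    K.IsIntegralUnit (a + b * K.sqrtD) ↔ K.IsIntegralUnit a ∨ K.IsIntegralUnit b := by
  by_cases hb0 : b = 0
  · simp [hb0, IsIntegralUnit]
  have hne := K.add_mul_sqrtD_ne_zero ha hb (Or.inr hb0)
  by_cases ha0 : a = 0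
  · simp [ha0, IsIntegralUnit, hb0, K.v_mul _ _ hb0 K.sqrtD_ne_zero, K.isIntegralUnit_sqrtD.2,
      K.sqrtD_ne_zero]
  have h := K.v_add_mul_sqrtD a b ha hb ha0 hb0
  have := ha'.resolve_left ha0
  have := hb'.resolve_left hb0
  simp only [IsIntegralUnit, h, ne_eq, hne, ha0, hb0, not_false_eq_true, true_and]
  omega

theorem isIntegralUnit_one_add_mul_sqrtD {b : E} (hb : b ∈ K.F) (hb0 : b ∈ K.ball 0) :
    K.IsIntegralUnit (1 + b * K.sqrtD) :=
  (K.isIntegralUnit_add_mul_sqrtD_iff K.F.one_mem hb isIntegralUnit_one.mem_ball_zero hb0).mpr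
    (Or.inl isIntegralUnit_one)

theorem one_add_mul_sqrtD_mul_one_add_mul_sqrtD {s t : E} (h : 1 + s * t * K.D ≠ 0) :
    (1 + t * K.sqrtD) * (1 + s * K.sqrtD)
      = (1 + s * t * K.D) * (1 + (s + t) / (1 + s * t * K.D) * K.sqrtD) := by
  rw [mul_add (1 + s * t * K.D), ← mul_assoc, mul_div_cancel₀ _ h, ← K.sqrtD_mul_self]
  ring

end UnramifiedExt

structure LevelChar (E : Type*) [Field E] extends UnramifiedExt E where
  χ : E → ℂ
  χ_mul : ∀ x y : E, x ≠ 0 → y ≠ 0 → χ (x * y) = χ x * χ y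
  c : ℤ
  one_le_c : 1 ≤ c
  χ_one_add : ∀ x : E, (x = 0 ∨ c ≤ v x) → χ (1 + x) = 1
  χ_eq_one : ∀ x : E, x ∈ F → x ≠ 0 → v x = 0 → χ x = 1

namespace LevelChar

open IntValuation UnramifiedExt

variable {E : Type*} [Field E] (S : LevelChar E)

/-- `w₁` and `w₂` have the same image in `O_Eˣ / O_Fˣ (1 + 𝔭ᶜ)`. -/
def SameClass (w₁ w₂ : E) : Prop :=
  ∃ a ∈ S.F, S.IsIntegralUnit a ∧ w₁ - a * w₂ ∈ S.ball S.c

def IsResidueSystem (R : Finset E) : Prop :=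
  (∀ ρ ∈ R, ρ ∈ S.F ∧ ρ ∈ S.ball 0) ∧
    ∀ y ∈ S.F, y ∈ S.ball 0 → ∃! ρ, ρ ∈ R ∧ y - ρ ∈ S.ball S.c

variable {S}

theorem sameClass_of_sub_mem_ball {w₁ w₂ : E} (h : w₁ - w₂ ∈ S.ball S.c) :
    S.SameClass w₁ w₂ :=
  ⟨1, S.F.one_mem, isIntegralUnit_one, by rwa [one_mul]⟩

theorem sameClass_mul_self {a : E} (ha : a ∈ S.F) (hu : S.IsIntegralUnit a) (w : E) :
    S.SameClass (a * w) w :=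
  ⟨a, ha, hu, by rw [sub_self]; exact zero_mem _⟩

theorem SameClass.symm {w₁ w₂ : E} (h : S.SameClass w₁ w₂) : S.SameClass w₂ w₁ := by
  obtain ⟨a, ha, hu, h⟩ := h
  refine ⟨a⁻¹, S.F.inv_mem ha, hu.inv, ?_⟩
  have : w₂ - a⁻¹ * w₁ = -((w₁ - a * w₂) * a⁻¹) := by field_simp [hu.1]; ring
  rw [this]
  exact neg_mem (mul_mem_ball_of_isIntegralUnit h hu.inv)

theorem SameClass.trans {w₁ w₂ w₃ : E} (h₁₂ : S.SameClass w₁ w₂) (h₂₃ : S.SameClass w₂ w₃) :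
    S.SameClass w₁ w₃ := by
  obtain ⟨a, ha, hau, h₁₂⟩ := h₁₂
  obtain ⟨b, hb, hbu, h₂₃⟩ := h₂₃
  refine ⟨a * b, S.F.mul_mem ha hb, hau.mul hbu, ?_⟩
  have : w₁ - a * b * w₃ = (w₁ - a * w₂) + (w₂ - b * w₃) * a := by ring
  rw [this]
  exact add_mem h₁₂ (mul_mem_ball_of_isIntegralUnit h₂₃ hau)

theorem SameClass.mul_left {w₁ w₂ u : E} (h : S.SameClass w₁ w₂) (hu : u ∈ S.ball 0) :
    S.SameClass (u * w₁) (u * w₂) := by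
  obtain ⟨a, ha, hau, h⟩ := h
  refine ⟨a, ha, hau, ?_⟩
  have : u * w₁ - a * (u * w₂) = u * (w₁ - a * w₂) := by ring
  simpa [this] using S.mul_mem_ball hu h

theorem SameClass.of_mul_left {w₁ w₂ u : E} (hu : S.IsIntegralUnit u)
    (h : S.SameClass (u * w₁) (u * w₂)) : S.SameClass w₁ w₂ := by
  simpa [← mul_assoc, inv_mul_cancel₀ hu.1] using h.mul_left hu.inv.mem_ball_zero

theorem χ_eq_of_sameClass {w₁ w₂ : E} (hw₂ : S.IsIntegralUnit w₂) (h : S.SameClass w₁ w₂) :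
    S.χ w₁ = S.χ w₂ := by
  obtain ⟨a, ha, hau, h⟩ := h
  have haw := hau.mul hw₂
  have hx : (w₁ - a * w₂) / (a * w₂) ∈ S.ball S.c := div_mem_ball_of_isIntegralUnit h haw
  have hx1 := isIntegralUnit_one.add_of_mem_ball (S.ball_anti S.one_le_c hx)
  have : w₁ = a * w₂ * (1 + (w₁ - a * w₂) / (a * w₂)) := by
    rw [mul_add, mul_one, mul_div_cancel₀ _ haw.1]; ring
  rw [this, S.χ_mul _ _ haw.1 hx1.1, S.χ_one_add _ hx, S.χ_mul _ _ hau.1 hw₂.1,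
    S.χ_eq_one a ha hau.1 hau.2]
  ring

theorem sum_χ_eq_zero_of_mul {Λ : Finset E} (hΛ : ∀ z ∈ Λ, S.IsIntegralUnit z)
    (hdistinct : ∀ z₁ ∈ Λ, ∀ z₂ ∈ Λ, S.SameClass z₁ z₂ → z₁ = z₂)
    {u : E} (hu : S.IsIntegralUnit u) (hχu : S.χ u ≠ 1)
    (hmaps : ∀ z ∈ Λ, ∃ z' ∈ Λ, S.SameClass (u * z) z') :
    ∑ z ∈ Λ, S.χ z = 0 := by
  choose! π hπΛ hπ using hmaps
  have hinj : Set.InjOn π Λ := fun z₁ h₁ z₂ h₂ he =>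
    hdistinct z₁ h₁ z₂ h₂ (((hπ z₁ h₁).trans (he ▸ hπ z₂ h₂).symm).of_mul_left hu)
  have hperm : ∑ z ∈ Λ, S.χ (π z) = ∑ z ∈ Λ, S.χ z :=
    Finset.sum_nbij π hπΛ hinj (Finset.surjOn_of_injOn_of_card_le π hπΛ hinj le_rfl)
      fun _ _ => rfl
  have hinv : S.χ u * ∑ z ∈ Λ, S.χ z = ∑ z ∈ Λ, S.χ z := by
    rw [Finset.mul_sum, ← hperm]
    refine Finset.sum_congr rfl fun z hz => ?_
    rw [← S.χ_mul _ _ hu.1 (hΛ z hz).1, χ_eq_of_sameClass (hΛ _ (hπΛ z hz)) (hπ z hz)]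
  have : (S.χ u - 1) * ∑ z ∈ Λ, S.χ z = 0 := by rw [sub_mul, hinv, one_mul, sub_self]
  exact (mul_eq_zero.mp this).resolve_left (sub_ne_zero.mpr hχu)

theorem sameClass_one_add_mul_sqrtD_iff {b₁ b₂ : E} (hb₁ : b₁ ∈ S.F) (hb₂ : b₂ ∈ S.F)
    (hb₂0 : b₂ ∈ S.ball 0) :
    S.SameClass (1 + b₁ * S.sqrtD) (1 + b₂ * S.sqrtD) ↔ b₁ - b₂ ∈ S.ball S.c := by
  refine ⟨fun ⟨a, ha, _, h⟩ => ?_, fun h => sameClass_of_sub_mem_ball ?_⟩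
  · rw [show 1 + b₁ * S.sqrtD - a * (1 + b₂ * S.sqrtD)
          = (1 - a) + (b₁ - a * b₂) * S.sqrtD by ring,
      S.add_mul_sqrtD_mem_ball_iff (sub_mem S.F.one_mem ha) (sub_mem hb₁ (S.F.mul_mem ha hb₂))]
      at h
    rw [show b₁ - b₂ = (b₁ - a * b₂) - (1 - a) * b₂ by ring]
    exact sub_mem h.2 (by simpa using S.mul_mem_ball h.1 hb₂0)
  · rw [show 1 + b₁ * S.sqrtD - (1 + b₂ * S.sqrtD) = (b₁ - b₂) * S.sqrtD by ring]
    exact mul_mem_ball_of_isIntegralUnit h S.isIntegralUnit_sqrtD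

theorem not_sameClass_one_add_mul_sqrtD_sqrtD {b : E} (hb : b ∈ S.F) :
    ¬S.SameClass (1 + b * S.sqrtD) S.sqrtD := by
  rintro ⟨a, ha, -, h⟩
  rw [show 1 + b * S.sqrtD - a * S.sqrtD = 1 + (b - a) * S.sqrtD by ring,
    S.add_mul_sqrtD_mem_ball_iff S.F.one_mem (sub_mem hb ha)] at h
  rcases h.1 with h | h
  · exact one_ne_zero h
  · rw [S.v_one] at h
    linarith [S.one_le_c]

theorem exists_χ_one_add_mul_sqrtD_ne_one
    (hgen : ∀ x : E, ∃ a ∈ S.F, ∃ b ∈ S.F, x = a + b * S.sqrtD) {n : ℤ} (hn : 1 ≤ n) {x : E}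
    (hx : x ∈ S.ball n) (hχx : S.χ (1 + x) ≠ 1) :
    ∃ t ∈ S.F, t ∈ S.ball n ∧ S.χ (1 + t * S.sqrtD) ≠ 1 := by
  obtain ⟨a, ha, b, hb, rfl⟩ := hgen x
  obtain ⟨han, hbn⟩ := (S.add_mul_sqrtD_mem_ball_iff ha hb).mp hx
  have ha1 : S.IsIntegralUnit (1 + a) := isIntegralUnit_one.add_of_mem_ball (S.ball_anti hn han)
  have haF : 1 + a ∈ S.F := add_mem S.F.one_mem ha
  have htF : b / (1 + a) ∈ S.F := S.F.div_mem hb haF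
  have htn : b / (1 + a) ∈ S.ball n := div_mem_ball_of_isIntegralUnit hbn ha1
  refine ⟨b / (1 + a), htF, htn, fun h => hχx ?_⟩
  have ht1 := S.isIntegralUnit_one_add_mul_sqrtD htF (S.ball_anti (by omega) htn)
  rw [show 1 + (a + b * S.sqrtD) = (1 + a) * (1 + b / (1 + a) * S.sqrtD) by
      field_simp [ha1.1]; ring,
    S.χ_mul _ _ ha1.1 ht1.1, S.χ_eq_one _ haF ha1.1 ha1.2, h, one_mul]

/-- `ρ mod 𝔭ᶜ` has valuation `i`, the zero class having valuation `c`. -/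
def HasLevel (i : ℤ) (ρ : E) : Prop :=
  (i = S.c ∧ ρ ∈ S.ball S.c) ∨ (i < S.c ∧ ρ ≠ 0 ∧ S.v ρ = i)

theorem hasLevel_mul_iff {i : ℤ} {ρ u : E} (hu : S.IsIntegralUnit u) :
    S.HasLevel i (ρ * u) ↔ S.HasLevel i ρ := by
  unfold HasLevel
  rw [mul_mem_ball_iff_of_isIntegralUnit hu]
  by_cases hρ : ρ = 0
  · simp [hρ]
  · simp [hρ, hu.1, S.v_mul _ _ hρ hu.1, hu.2]

theorem hasLevel_iff_of_lt {i : ℤ} (hi : i < S.c) {ρ : E} :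
    S.HasLevel i ρ ↔ ρ ∈ S.ball i ∧ ρ ∉ S.ball (i + 1) := by
  by_cases hρ : ρ = 0
  · simp [HasLevel, hρ, hi.ne]
  · simp only [HasLevel, mem_ball, hρ, hi, hi.ne, false_and, false_or, true_and, ne_eq,
      not_false_eq_true]
    omega

namespace IsResidueSystem

variable {R : Finset E}

theorem mem_F (hR : S.IsResidueSystem R) {ρ : E} (hρ : ρ ∈ R) : ρ ∈ S.F := (hR.1 ρ hρ).1

theorem mem_ball_zero (hR : S.IsResidueSystem R) {ρ : E} (hρ : ρ ∈ R) : ρ ∈ S.ball 0 :=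
  (hR.1 ρ hρ).2

theorem eq_of_sub_mem_ball (hR : S.IsResidueSystem R) {ρ₁ ρ₂ : E} (h₁ : ρ₁ ∈ R) (h₂ : ρ₂ ∈ R)
    (h : ρ₁ - ρ₂ ∈ S.ball S.c) : ρ₁ = ρ₂ :=
  (hR.2 ρ₁ (hR.mem_F h₁) (hR.mem_ball_zero h₁)).unique
    ⟨h₁, by rw [sub_self]; exact zero_mem _⟩ ⟨h₂, h⟩

theorem eq_of_sameClass (hR : S.IsResidueSystem R) {ρ₁ ρ₂ : E} (h₁ : ρ₁ ∈ R) (h₂ : ρ₂ ∈ R)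
    (h : S.SameClass (1 + ρ₁ * S.sqrtD) (1 + ρ₂ * S.sqrtD)) : ρ₁ = ρ₂ :=
  hR.eq_of_sub_mem_ball h₁ h₂
    ((sameClass_one_add_mul_sqrtD_iff (hR.mem_F h₁) (hR.mem_F h₂) (hR.mem_ball_zero h₂)).mp h)

theorem exists_sub_mem_ball (hR : S.IsResidueSystem R) {y : E} (hy : y ∈ S.F)
    (hy0 : y ∈ S.ball 0) : ∃ ρ ∈ R, y - ρ ∈ S.ball S.c :=
  (hR.2 y hy hy0).exists

theorem image_mul (hR : S.IsResidueSystem R) {a : E} (ha : a ∈ S.F) (hau : S.IsIntegralUnit a) :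
    S.IsResidueSystem (R.image (· * a)) := by
  refine ⟨fun ρ hρ => ?_, fun y hy hy0 => ?_⟩
  · obtain ⟨ρ, hρR, rfl⟩ := Finset.mem_image.mp hρ
    exact ⟨S.F.mul_mem (hR.mem_F hρR) ha,
      mul_mem_ball_of_isIntegralUnit (hR.mem_ball_zero hρR) hau⟩
  obtain ⟨ρ, hρ, hyρ⟩ := hR.exists_sub_mem_ball (S.F.div_mem hy ha)
    (div_mem_ball_of_isIntegralUnit hy0 hau)
  have key : ∀ ρ' ∈ R, y - ρ' * a = (y / a - ρ') * a := fun ρ' _ => by field_simp [hau.1]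
  refine ⟨ρ * a, ⟨Finset.mem_image_of_mem _ hρ, ?_⟩, ?_⟩
  · rw [key ρ hρ]; exact mul_mem_ball_of_isIntegralUnit hyρ hau
  rintro _ ⟨hmem, h⟩
  obtain ⟨ρ', hρ', rfl⟩ := Finset.mem_image.mp hmem
  rw [key ρ' hρ'] at h
  have h' := div_mem_ball_of_isIntegralUnit h hau
  rw [mul_div_cancel_right₀ _ hau.1] at h'
  rw [hR.eq_of_sub_mem_ball hρ' hρ (by simpa using sub_mem hyρ h')]

theorem sum_ite_mem_ball_c (hR : S.IsResidueSystem R) :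
    ∑ ρ ∈ R, (if ρ ∈ S.ball S.c then S.χ (1 + ρ * S.sqrtD) else 0) = 1 := by
  obtain ⟨ρ₀, hρ₀, h₀⟩ := hR.exists_sub_mem_ball S.F.zero_mem (zero_mem _)
  rw [zero_sub, neg_mem_iff] at h₀
  rw [Finset.sum_eq_single ρ₀ (fun ρ hρ hne => if_neg fun h =>
    hne (hR.eq_of_sub_mem_ball hρ hρ₀ (sub_mem h h₀))) (absurd hρ₀), if_pos h₀]
  exact S.χ_one_add _ (mul_mem_ball_of_isIntegralUnit h₀ S.isIntegralUnit_sqrtD)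

theorem exists_sameClass_one_add_mul_sqrtD (hR : S.IsResidueSystem R) {i : ℤ} (hi0 : 0 ≤ i)
    (hic : i ≤ S.c) {b : E} (hb : b ∈ S.F) (hbi : b ∈ S.ball i) :
    ∃ ρ ∈ R, ρ ∈ S.ball i ∧ S.SameClass (1 + b * S.sqrtD) (1 + ρ * S.sqrtD) := by
  obtain ⟨ρ, hρ, hbρ⟩ := hR.exists_sub_mem_ball hb (S.ball_anti hi0 hbi)
  refine ⟨ρ, hρ, ?_,
    (sameClass_one_add_mul_sqrtD_iff hb (hR.mem_F hρ) (hR.mem_ball_zero hρ)).mpr hbρ⟩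
  simpa using sub_mem hbi (S.ball_anti hic hbρ)

theorem sum_ite_mem_ball_eq_zero (hR : S.IsResidueSystem R) {i : ℤ} (hi0 : 0 ≤ i)
    (hic : i ≤ S.c) {t : E} (ht : t ∈ S.F) (hti : t ∈ S.ball i) (ht1 : t ∈ S.ball 1)
    (hχt : S.χ (1 + t * S.sqrtD) ≠ 1) :
    ∑ ρ ∈ R, (if ρ ∈ S.ball i then S.χ (1 + ρ * S.sqrtD) else 0) = 0 := by
  have hinj : Set.InjOn (fun ρ => 1 + ρ * S.sqrtD) ↑(R.filter (· ∈ S.ball i)) :=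
    fun _ _ _ _ h => mul_right_cancel₀ S.sqrtD_ne_zero (add_left_cancel h)
  rw [← Finset.sum_filter, ← Finset.sum_image hinj]
  refine sum_χ_eq_zero_of_mul ?_ ?_
    (S.isIntegralUnit_one_add_mul_sqrtD ht (S.ball_anti zero_le_one ht1)) hχt ?_
  · simp only [Finset.mem_image, Finset.mem_filter]
    rintro _ ⟨ρ, ⟨hρ, -⟩, rfl⟩
    exact S.isIntegralUnit_one_add_mul_sqrtD (hR.mem_F hρ) (hR.mem_ball_zero hρ)
  · simp only [Finset.mem_image, Finset.mem_filter]
    rintro _ ⟨ρ₁, ⟨hρ₁, -⟩, rfl⟩ _ ⟨ρ₂, ⟨hρ₂, -⟩, rfl⟩ h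
    rw [hR.eq_of_sameClass hρ₁ hρ₂ h]
  · simp only [Finset.mem_image, Finset.mem_filter]
    rintro _ ⟨ρ, ⟨hρ, hρi⟩, rfl⟩
    have hd : S.IsIntegralUnit (1 + ρ * t * S.D) := isIntegralUnit_one.add_of_mem_ball
      (mul_mem_ball_of_isIntegralUnit (by simpa using S.mul_mem_ball (hR.mem_ball_zero hρ) ht1)
        S.isIntegralUnit_D)
    have hdF : 1 + ρ * t * S.D ∈ S.F :=
      add_mem S.F.one_mem (S.F.mul_mem (S.F.mul_mem (hR.mem_F hρ) ht) S.D_mem)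
    obtain ⟨ρ', hρ', hρ'i, hcl⟩ := hR.exists_sameClass_one_add_mul_sqrtD hi0 hic
      (S.F.div_mem (add_mem (hR.mem_F hρ) ht) hdF)
      (div_mem_ball_of_isIntegralUnit (add_mem hρi hti) hd)
    refine ⟨1 + ρ' * S.sqrtD, ⟨ρ', ⟨hρ', hρ'i⟩, rfl⟩, ?_⟩
    rw [S.one_add_mul_sqrtD_mul_one_add_mul_sqrtD hd.1]
    exact (sameClass_mul_self hdF hd _).trans hcl

theorem exists_sameClass_of_isIntegralUnit (hR : S.IsResidueSystem R) (hc : S.c = 1)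
    (hgen : ∀ x : E, ∃ a ∈ S.F, ∃ b ∈ S.F, x = a + b * S.sqrtD) {w : E}
    (hw : S.IsIntegralUnit w) :
    (∃ ρ ∈ R, S.SameClass w (1 + ρ * S.sqrtD)) ∨ S.SameClass w S.sqrtD := by
  obtain ⟨α, hα, β, hβ, rfl⟩ := hgen w
  obtain ⟨hα0, hβ0⟩ := (S.add_mul_sqrtD_mem_ball_iff hα hβ).mp hw.mem_ball_zero
  by_cases hαu : S.IsIntegralUnit α
  · obtain ⟨ρ, hρ, -, hcl⟩ :=
      hR.exists_sameClass_one_add_mul_sqrtD le_rfl (by linarith [S.one_le_c])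
      (S.F.div_mem hβ hα) (div_mem_ball_of_isIntegralUnit hβ0 hαu)
    refine Or.inl ⟨ρ, hρ, ?_⟩
    rw [show α + β * S.sqrtD = α * (1 + β / α * S.sqrtD) by field_simp [hαu.1]]
    exact (sameClass_mul_self hα hαu _).trans hcl
  · have hβu := ((S.isIntegralUnit_add_mul_sqrtD_iff hα hβ hα0 hβ0).mp hw).resolve_left hαu
    refine Or.inr ⟨β, hβ, hβu, ?_⟩
    rw [add_sub_cancel_right, hc]
    exact mem_ball_one_of_not_isIntegralUnit hα0 hαu

theorem sum_add_χ_sqrtD_eq_zero (hR : S.IsResidueSystem R) (hc : S.c = 1)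
    (hgen : ∀ x : E, ∃ a ∈ S.F, ∃ b ∈ S.F, x = a + b * S.sqrtD) {u : E}
    (hu : S.IsIntegralUnit u) (hχu : S.χ u ≠ 1) :
    ∑ ρ ∈ R, S.χ (1 + ρ * S.sqrtD) + S.χ S.sqrtD = 0 := by
  have hinj : Set.InjOn (fun ρ => 1 + ρ * S.sqrtD) ↑R :=
    fun _ _ _ _ h => mul_right_cancel₀ S.sqrtD_ne_zero (add_left_cancel h)
  have hnot : S.sqrtD ∉ R.image (fun ρ => 1 + ρ * S.sqrtD) := by
    simp only [Finset.mem_image, not_exists, not_and]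
    intro ρ hρ h
    exact S.add_mul_sqrtD_ne_zero S.F.one_mem (sub_mem (hR.mem_F hρ) S.F.one_mem)
      (Or.inl one_ne_zero) (by linear_combination h)
  rw [← Finset.sum_image hinj, add_comm, ← Finset.sum_insert hnot]
  have hΛ : ∀ z ∈ insert S.sqrtD (R.image (fun ρ => 1 + ρ * S.sqrtD)), S.IsIntegralUnit z := by
    simp only [Finset.mem_insert, Finset.mem_image]
    rintro _ (rfl | ⟨ρ, hρ, rfl⟩)
    · exact S.isIntegralUnit_sqrtD
    · exact S.isIntegralUnit_one_add_mul_sqrtD (hR.mem_F hρ) (hR.mem_ball_zero hρ)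
  refine sum_χ_eq_zero_of_mul hΛ ?_ hu hχu fun z hz => ?_
  · simp only [Finset.mem_insert, Finset.mem_image]
    rintro _ (rfl | ⟨ρ₁, hρ₁, rfl⟩) _ (rfl | ⟨ρ₂, hρ₂, rfl⟩) h
    · rfl
    · exact absurd h.symm (not_sameClass_one_add_mul_sqrtD_sqrtD (hR.mem_F hρ₂))
    · exact absurd h (not_sameClass_one_add_mul_sqrtD_sqrtD (hR.mem_F hρ₁))
    · rw [hR.eq_of_sameClass hρ₁ hρ₂ h]
  rcases hR.exists_sameClass_of_isIntegralUnit hc hgen (hu.mul (hΛ z hz)) with ⟨ρ, hρ, h⟩ | h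
  · exact ⟨_, Finset.mem_insert_of_mem (Finset.mem_image_of_mem _ hρ), h⟩
  · exact ⟨_, Finset.mem_insert_self _ _, h⟩

theorem sum_ite_hasLevel (hR : S.IsResidueSystem R) (hc : 2 ≤ S.c) {t : E} (ht : t ∈ S.F)
    (htc : t ∈ S.ball (S.c - 1)) (hχt : S.χ (1 + t * S.sqrtD) ≠ 1) {i : ℤ} (hi0 : 0 ≤ i)
    (hic : i ≤ S.c) :
    ∑ ρ ∈ R, (if S.HasLevel i ρ then S.χ (1 + ρ * S.sqrtD) else 0)
      = if i = S.c then 1 else if i = S.c - 1 then -1 else 0 := by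
  have hvanish : ∀ j, 0 ≤ j → j ≤ S.c - 1 →
      ∑ ρ ∈ R, (if ρ ∈ S.ball j then S.χ (1 + ρ * S.sqrtD) else 0) = 0 := fun j hj0 hjc =>
    hR.sum_ite_mem_ball_eq_zero hj0 (by omega) ht (S.ball_anti hjc htc)
      (S.ball_anti (by omega) htc) hχt
  rcases hic.eq_or_lt with rfl | hlt
  · rw [if_pos rfl, ← hR.sum_ite_mem_ball_c]
    exact Finset.sum_congr rfl fun ρ _ => if_congr (by simp [HasLevel]) rfl rfl
  have hsub : ∀ ρ, (if S.HasLevel i ρ then S.χ (1 + ρ * S.sqrtD) else 0)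
      = (if ρ ∈ S.ball i then S.χ (1 + ρ * S.sqrtD) else 0)
        - (if ρ ∈ S.ball (i + 1) then S.χ (1 + ρ * S.sqrtD) else 0) := by
    intro ρ
    rw [if_congr (hasLevel_iff_of_lt hlt) rfl rfl]
    by_cases h₂ : ρ ∈ S.ball (i + 1)
    · simp [h₂, S.ball_anti (show i ≤ i + 1 by omega) h₂]
    · simp [h₂]
  rw [Finset.sum_congr rfl fun ρ _ => hsub ρ, Finset.sum_sub_distrib, hvanish i hi0 (by omega),
    if_neg hlt.ne]
  rcases (show i + 1 = S.c ∨ i + 1 ≤ S.c - 1 by omega) with h | h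
  · rw [h, hR.sum_ite_mem_ball_c, if_pos (by omega)]
    ring
  · rw [hvanish (i + 1) (by omega) h, if_neg (by omega)]
    ring

theorem sum_ite_hasLevel_sqrtD_add (hR : S.IsResidueSystem R) (i : ℤ) :
    ∑ ρ ∈ R, (if S.HasLevel i ρ then S.χ (S.sqrtD + ρ) else 0)
      = S.χ S.sqrtD * ∑ ρ ∈ R.image (· * S.D⁻¹),
          (if S.HasLevel i ρ then S.χ (1 + ρ * S.sqrtD) else 0) := by
  rw [Finset.sum_image fun _ _ _ _ h => mul_right_cancel₀ (inv_ne_zero S.D_ne_zero) h,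
    Finset.mul_sum]
  refine Finset.sum_congr rfl fun ρ hρ => ?_
  rw [hasLevel_mul_iff S.isIntegralUnit_D.inv]
  split_ifs
  · have hunit := S.isIntegralUnit_one_add_mul_sqrtD (S.F.mul_mem (hR.mem_F hρ)
      (S.F.inv_mem S.D_mem)) (mul_mem_ball_of_isIntegralUnit (hR.mem_ball_zero hρ)
      S.isIntegralUnit_D.inv)
    rw [← S.χ_mul _ _ S.sqrtD_ne_zero hunit.1]
    congr 1
    linear_combination (-(ρ * S.D⁻¹)) * S.sqrtD_mul_self - ρ * mul_inv_cancel₀ S.D_ne_zero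
  · rw [mul_zero]

end IsResidueSystem

end LevelChar

end UnramifiedCharSum

theorem stmt_11_general
    (E : Type*) [Field E] (F : Subfield E)
    (v : E → ℤ)
    (hvmul : ∀ x y : E, x ≠ 0 → y ≠ 0 → v (x * y) = v x + v y)
    (hvadd : ∀ x y : E, x ≠ 0 → y ≠ 0 → x + y ≠ 0 → min (v x) (v y) ≤ v (x + y))
    (D sqrtD : E) (hDF : D ∈ F) (hD0 : D ≠ 0) (hDv : v D = 0)
    (hDns : ¬ ∃ y ∈ F, y * y = D)
    (hsq : sqrtD * sqrtD = D)
    (hgen : ∀ x : E, ∃ a ∈ F, ∃ b ∈ F, x = a + b * sqrtD)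
    (hinert : ∀ a b : E, a ∈ F → b ∈ F → a ≠ 0 → b ≠ 0 →
        v (a + b * sqrtD) = min (v a) (v b))
    (χ : E → ℂ)
    (hχm : ∀ x y : E, x ≠ 0 → y ≠ 0 → χ (x * y) = χ x * χ y)
    (c : ℤ) (hc : 1 ≤ c)
    (hχtriv : ∀ x : E, (x = 0 ∨ c ≤ v x) → χ (1 + x) = 1)
    (hχnt1 : 1 < c → ∃ x : E, (x = 0 ∨ c - 1 ≤ v x) ∧ χ (1 + x) ≠ 1)
    (hχnt2 : c = 1 → ∃ u : E, u ≠ 0 ∧ v u = 0 ∧ χ u ≠ 1)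
    (hχF : ∀ x : E, x ∈ F → x ≠ 0 → v x = 0 → χ x = 1)
    (R : Finset E)
    (hR1 : ∀ ρ ∈ R, ρ ∈ F ∧ (ρ = 0 ∨ 0 ≤ v ρ))
    (hR2 : ∀ y : E, y ∈ F → (y = 0 ∨ 0 ≤ v y) →
        ∃! ρ, ρ ∈ R ∧ (y - ρ = 0 ∨ c ≤ v (y - ρ))) :
    (2 ≤ c → ∀ i : ℤ, 0 ≤ i → i ≤ c →
      ((∑ ρ ∈ R, if (i = c ∧ (ρ = 0 ∨ c ≤ v ρ)) ∨ (i < c ∧ ρ ≠ 0 ∧ v ρ = i)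
          then χ (1 + ρ * sqrtD) else 0)
        = if i = c then 1 else if i = c - 1 then -1 else 0) ∧
      ((∑ ρ ∈ R, if (i = c ∧ (ρ = 0 ∨ c ≤ v ρ)) ∨ (i < c ∧ ρ ≠ 0 ∧ v ρ = i)
          then χ (sqrtD + ρ) else 0)
        = if i = c then χ sqrtD else if i = c - 1 then -(χ sqrtD) else 0)) ∧
    (c = 1 → (∑ ρ ∈ R, χ (1 + ρ * sqrtD)) + χ sqrtD = 0) := by
  let S : UnramifiedCharSum.LevelChar E :=
    { v, v_mul := hvmul, min_le_v_add := hvadd, F, D, sqrtD, D_mem := hDF, D_ne_zero := hD0,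
      v_D := hDv, not_exists_mul_self_eq_D := hDns, sqrtD_mul_self := hsq,
      v_add_mul_sqrtD := hinert, χ, χ_mul := hχm, c, one_le_c := hc, χ_one_add := hχtriv,
      χ_eq_one := hχF }
  have hR : S.IsResidueSystem R := ⟨hR1, hR2⟩
  have hlevel : ∀ (i : ℤ) (g : E → ℂ),
      (∑ ρ ∈ R, if (i = c ∧ (ρ = 0 ∨ c ≤ v ρ)) ∨ (i < c ∧ ρ ≠ 0 ∧ v ρ = i) then g ρ else 0)
        = ∑ ρ ∈ R, if S.HasLevel i ρ then g ρ else 0 :=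
    fun i g => Finset.sum_congr rfl fun ρ _ => if_congr Iff.rfl rfl rfl
  refine ⟨fun hc2 i hi0 hic => ?_, fun hc1 => ?_⟩
  · obtain ⟨x, hx, hχx⟩ := hχnt1 (by omega)
    obtain ⟨t, ht, htc, hχt⟩ :=
      S.exists_χ_one_add_mul_sqrtD_ne_one hgen (show 1 ≤ c - 1 by omega) hx hχx
    have hsum := fun R' (hR' : S.IsResidueSystem R') => hR'.sum_ite_hasLevel hc2 ht htc hχt hi0 hic
    rw [hlevel, hlevel, hR.sum_ite_hasLevel_sqrtD_add, hsum R hR,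
      hsum _ (hR.image_mul (S.F.inv_mem hDF) S.isIntegralUnit_D.inv)]
    exact ⟨rfl, by split_ifs <;> ring⟩
  · obtain ⟨u, hu0, huv, hχu⟩ := hχnt2 hc1
    exact hR.sum_add_χ_sqrtD_eq_zero hc1 hgen ⟨hu0, huv⟩ hχu

/-- Character sums over `O_F/ϖᶜO_F` for a quasi-character `χ` of `Eˣ`
of level `c ≥ 1` (with `E/F` unramified quadratic) whose restriction to `Fˣ` is
unramified.  `R` is any complete set of representatives of `O_F/ϖᶜO_F`; `v(b) = i` for
a class means any representative has valuation `i` (for `i < c`), and `v(b) = c` means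
the class of `0`.  The sums are as stated. -/
theorem stmt_11
    (E : Type*) [Field E] (F : Subfield E)
    (v : E → ℤ) (ϖ : E) (q : ℕ) (hq : 2 ≤ q)
    (hϖF : ϖ ∈ F) (hϖ0 : ϖ ≠ 0) (hϖv : v ϖ = 1)
    (hvmul : ∀ x y : E, x ≠ 0 → y ≠ 0 → v (x * y) = v x + v y)
    (hvadd : ∀ x y : E, x ≠ 0 → y ≠ 0 → x + y ≠ 0 → min (v x) (v y) ≤ v (x + y))
    (hodd : (2 : E) ≠ 0 ∧ v 2 = 0)
    (D sqrtD : E) (hDF : D ∈ F) (hD0 : D ≠ 0) (hDv : v D = 0)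
    (hDns : ¬ ∃ y ∈ F, y * y = D)
    (hsq : sqrtD * sqrtD = D)
    (hgen : ∀ x : E, ∃ a ∈ F, ∃ b ∈ F, x = a + b * sqrtD)
    (hinert : ∀ a b : E, a ∈ F → b ∈ F → a ≠ 0 → b ≠ 0 →
        v (a + b * sqrtD) = min (v a) (v b))
    (χ : E → ℂ)
    (hχm : ∀ x y : E, x ≠ 0 → y ≠ 0 → χ (x * y) = χ x * χ y)
    (hχ0 : ∀ x : E, x ≠ 0 → χ x ≠ 0)
    (c : ℤ) (hc : 1 ≤ c)
    (hχtriv : ∀ x : E, (x = 0 ∨ c ≤ v x) → χ (1 + x) = 1)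
    (hχnt1 : 1 < c → ∃ x : E, (x = 0 ∨ c - 1 ≤ v x) ∧ χ (1 + x) ≠ 1)
    (hχnt2 : c = 1 → ∃ u : E, u ≠ 0 ∧ v u = 0 ∧ χ u ≠ 1)
    (hχF : ∀ x : E, x ∈ F → x ≠ 0 → v x = 0 → χ x = 1)
    (R : Finset E)
    (hR1 : ∀ ρ ∈ R, ρ ∈ F ∧ (ρ = 0 ∨ 0 ≤ v ρ))
    (hR2 : ∀ y : E, y ∈ F → (y = 0 ∨ 0 ≤ v y) →
        ∃! ρ, ρ ∈ R ∧ (y - ρ = 0 ∨ c ≤ v (y - ρ))) :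
    (2 ≤ c → ∀ i : ℤ, 0 ≤ i → i ≤ c →
      ((∑ ρ ∈ R, if (i = c ∧ (ρ = 0 ∨ c ≤ v ρ)) ∨ (i < c ∧ ρ ≠ 0 ∧ v ρ = i)
          then χ (1 + ρ * sqrtD) else 0)
        = if i = c then 1 else if i = c - 1 then -1 else 0) ∧
      ((∑ ρ ∈ R, if (i = c ∧ (ρ = 0 ∨ c ≤ v ρ)) ∨ (i < c ∧ ρ ≠ 0 ∧ v ρ = i)
          then χ (sqrtD + ρ) else 0)
        = if i = c then χ sqrtD else if i = c - 1 then -(χ sqrtD) else 0)) ∧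
    (c = 1 → (∑ ρ ∈ R, χ (1 + ρ * sqrtD)) + χ sqrtD = 0) :=
  stmt_11_general E F v hvmul hvadd D sqrtD hDF hD0 hDv hDns hsq hgen hinert χ hχm c hc hχtriv hχnt1
    hχnt2 hχF R hR1 hR2
end

section
/- For every integer c ≥ 1, GL₂(F) is the disjoint union over i = 0, 1, …, c of the sets B(F)·[[1,0],[ϖⁱ,1]]·K₁(ϖᶜ) (where for i = c the factor [[1,0],[ϖᶜ,1]] lies in K₁(ϖᶜ), so that coset is B(F)·K₁(ϖᶜ)). -/
/-!
Extend `v` to a valuation `w : F → WithTop ℤ` and look at the bottom row `(d, e)` of `M`. Left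
multiplication by `B(F)` scales this row, and for `k ∈ K₁(ϖᶜ)` the bottom row of
`[[1,0],[ϖⁱ,1]]·k` is `(ϖⁱ k₀₀ + k₁₀, ϖⁱ k₀₁ + k₁₁)`, where `k₀₀, k₁₁` are units and `w k₁₀ ≥ c`.
So `w d - w e` equals `i` when `0 < i < c`, is at least `c` when `i = c` and at most `0` when
`i = 0`; these ranges are disjoint, which gives uniqueness. Conversely, according to the range of
`w d - w e`, an explicit `k` with `k₁₁ = 1` makes the bottom row of `[[1,0],[ϖⁱ,1]]·k`
proportional to `(d, e)`, and then `M·([[1,0],[ϖⁱ,1]]·k)⁻¹` is upper triangular.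
-/

open Matrix

section DoubleCosets

variable {F : Type*} [Field F]

section Valuation

variable {w : AddValuation F (WithTop ℤ)}

lemma val_pow_of_val_eq_one {ϖ : F} (hϖ : w ϖ = 1) (i : ℕ) : w (ϖ ^ i) = i := by
  rw [w.map_pow, hϖ, nsmul_one]

lemma le_val_div_iff {n : WithTop ℤ} {x y : F} (hy : y ≠ 0) :
    n ≤ w (x / y) ↔ w y + n ≤ w x := by
  rw [← WithTop.add_le_add_iff_left (w.ne_top_iff.mpr hy), ← w.map_mul, mul_div_cancel₀ _ hy]

lemma exists_val_eq_coe {x : F} (hx : x ≠ 0) : ∃ a : ℤ, w x = a :=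
  (WithTop.ne_top_iff_exists.mp (w.ne_top_iff.mpr hx)).imp fun _ h => h.symm

end Valuation

section UpperTriangular

variable {b : Matrix (Fin 2) (Fin 2) F}

lemma upperTriangular_mul_apply_one (hb : b 1 0 = 0) (N : Matrix (Fin 2) (Fin 2) F) (j : Fin 2) :
    (b * N) 1 j = b 1 1 * N 1 j := by
  simp [mul_apply, Fin.sum_univ_two, hb]

lemma apply_one_one_ne_zero_of_upperTriangular (hb : b 1 0 = 0) (hdet : b.det ≠ 0) :
    b 1 1 ≠ 0 := by
  rintro h
  exact hdet (by rw [det_fin_two, hb, h]; ring)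

lemma exists_upperTriangular_mul_eq {M N : Matrix (Fin 2) (Fin 2) F} (hM : M.det ≠ 0)
    (hN : N.det ≠ 0) {β : F} (h : ∀ j, M 1 j = β * N 1 j) :
    ∃ b : Matrix (Fin 2) (Fin 2) F, b 1 0 = 0 ∧ b.det ≠ 0 ∧ M = b * N := by
  have hN' : IsUnit N.det := isUnit_iff_ne_zero.mpr hN
  refine ⟨M * N⁻¹, ?_, ?_, (nonsing_inv_mul_cancel_right _ _ hN').symm⟩
  · have : (N * N⁻¹) 1 0 = 0 := by simp [mul_nonsing_inv _ hN']
    simp only [mul_apply, h, mul_assoc, ← Finset.mul_sum] at this ⊢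
    rw [this, mul_zero]
  · rw [det_mul, det_nonsing_inv, Ring.inverse_eq_inv']
    exact mul_ne_zero hM (inv_ne_zero hN)

lemma lowerUnipotent_mul_apply_one (a : F) (k : Matrix (Fin 2) (Fin 2) F) (j : Fin 2) :
    (!![1, 0; a, 1] * k) 1 j = a * k 0 j + k 1 j := by
  simp [mul_apply, Fin.sum_univ_two]

end UpperTriangular

section K₁

variable (w : AddValuation F (WithTop ℤ)) (c : ℕ)

/-- `k ∈ K₁(ϖᶜ)`; integrality of the entries together with `w k.det = 0` says `k ∈ GL₂(O)`. -/
structure MemK₁ (k : Matrix (Fin 2) (Fin 2) F) : Prop where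
  val_entry_nonneg : ∀ i j, 0 ≤ w (k i j)
  val_det : w k.det = 0
  le_val_one_zero : (c : WithTop ℤ) ≤ w (k 1 0)
  le_val_one_one_sub_one : (c : WithTop ℤ) ≤ w (k 1 1 - 1)

variable {w c} {k : Matrix (Fin 2) (Fin 2) F} {ϖ : F} {i : ℕ}

lemma MemK₁.det_ne_zero (hk : MemK₁ w c k) : k.det ≠ 0 :=
  w.ne_top_iff.mp (by rw [hk.val_det]; exact WithTop.zero_ne_top)

lemma MemK₁.val_one_one (hc : 1 ≤ c) (hk : MemK₁ w c k) : w (k 1 1) = 0 := by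
  have : w 1 < w (k 1 1 - 1) := by
    rw [w.map_one]; exact (Nat.cast_pos'.mpr hc).trans_le hk.le_val_one_one_sub_one
  rw [w.map_eq_of_lt_sub this, w.map_one]

lemma MemK₁.val_zero_zero (hc : 1 ≤ c) (hk : MemK₁ w c k) : w (k 0 0) = 0 := by
  have hsmall : w k.det < w (k 0 1 * k 1 0) := by
    rw [hk.val_det, w.map_mul]
    exact (Nat.cast_pos'.mpr hc).trans_le
      (hk.le_val_one_zero.trans (le_add_of_nonneg_left (hk.val_entry_nonneg 0 1)))
  have h : k 0 0 * k 1 1 = k.det + k 0 1 * k 1 0 := by rw [det_fin_two]; ring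
  have := w.map_add_eq_of_lt_left hsmall
  rwa [← h, hk.val_det, w.map_mul, hk.val_one_one hc, add_zero] at this

lemma memK₁_of_entries {a b x : F} (ha : 0 ≤ w a) (hb : 0 ≤ w b) (hx : (c : WithTop ℤ) ≤ w x)
    (hdet : w (a - b * x) = 0) : MemK₁ w c !![a, b; x, 1] := by
  refine ⟨fun i j => ?_, by simpa [det_fin_two] using hdet, by simpa using hx, by simp⟩
  fin_cases i <;> fin_cases j
  · simpa using ha
  · simpa using hb
  · exact (Nat.cast_nonneg' c).trans (by simpa using hx)
  · simp [w.map_one]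

lemma MemK₁.le_val_lowerUnipotent_mul_one_zero (hk : MemK₁ w c k) (hϖ : w ϖ = 1) (hi : i ≤ c) :
    (i : WithTop ℤ) ≤ w ((!![1, 0; ϖ ^ i, 1] * k) 1 0) := by
  rw [lowerUnipotent_mul_apply_one]
  refine w.map_le_add ?_ ((Nat.cast_le.mpr hi).trans hk.le_val_one_zero)
  rw [w.map_mul, val_pow_of_val_eq_one hϖ]
  exact le_add_of_nonneg_right (hk.val_entry_nonneg 0 0)

lemma MemK₁.val_lowerUnipotent_mul_one_zero (hc : 1 ≤ c) (hk : MemK₁ w c k) (hϖ : w ϖ = 1)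
    (hi : i < c) : w ((!![1, 0; ϖ ^ i, 1] * k) 1 0) = i := by
  have hlead : w (ϖ ^ i * k 0 0) = i := by
    rw [w.map_mul, val_pow_of_val_eq_one hϖ, hk.val_zero_zero hc, add_zero]
  have hsmall : w (ϖ ^ i * k 0 0) < w (k 1 0) := by
    rw [hlead]; exact (Nat.cast_lt.mpr hi).trans_le hk.le_val_one_zero
  rw [lowerUnipotent_mul_apply_one, w.map_add_eq_of_lt_left hsmall, hlead]

lemma MemK₁.val_lowerUnipotent_mul_one_one_nonneg (hk : MemK₁ w c k) (hϖ : w ϖ = 1) :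
    0 ≤ w ((!![1, 0; ϖ ^ i, 1] * k) 1 1) := by
  rw [lowerUnipotent_mul_apply_one]
  refine w.map_le_add ?_ (hk.val_entry_nonneg 1 1)
  rw [w.map_mul, val_pow_of_val_eq_one hϖ]
  exact add_nonneg (Nat.cast_nonneg' i) (hk.val_entry_nonneg 0 1)

lemma MemK₁.val_lowerUnipotent_mul_one_one (hc : 1 ≤ c) (hk : MemK₁ w c k) (hϖ : w ϖ = 1)
    (hi : 0 < i) : w ((!![1, 0; ϖ ^ i, 1] * k) 1 1) = 0 := by
  have hsmall : w (k 1 1) < w (ϖ ^ i * k 0 1) := by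
    rw [hk.val_one_one hc, w.map_mul, val_pow_of_val_eq_one hϖ]
    exact (Nat.cast_pos'.mpr hi).trans_le (le_add_of_nonneg_right (hk.val_entry_nonneg 0 1))
  rw [lowerUnipotent_mul_apply_one, add_comm, w.map_add_eq_of_lt_left hsmall, hk.val_one_one hc]

variable (w c ϖ) in
/-- `M ∈ B(F) · [[1,0],[ϖⁱ,1]] · K₁(ϖᶜ)`. -/
def MemDoubleCoset (i : ℕ) (M : Matrix (Fin 2) (Fin 2) F) : Prop :=
  ∃ b k : Matrix (Fin 2) (Fin 2) F, b 1 0 = 0 ∧ b.det ≠ 0 ∧ MemK₁ w c k ∧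
    M = b * !![1, 0; ϖ ^ i, 1] * k

variable {M : Matrix (Fin 2) (Fin 2) F}

lemma le_of_memDoubleCoset_of_memDoubleCoset (hc : 1 ≤ c) (hϖ : w ϖ = 1) {j : ℕ} (hj : j ≤ c)
    (hiM : MemDoubleCoset w c ϖ i M) (hjM : MemDoubleCoset w c ϖ j M) : j ≤ i := by
  obtain ⟨b, k, hb, hbdet, hk, rfl⟩ := hiM
  obtain ⟨b', k', hb', -, hk', hM⟩ := hjM
  by_contra! hij
  set N := !![1, 0; ϖ ^ i, 1] * k
  set N' := !![1, 0; ϖ ^ j, 1] * k'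
  have hrow : ∀ l, b 1 1 * N 1 l = b' 1 1 * N' 1 l := fun l => by
    rw [← upperTriangular_mul_apply_one hb, ← upperTriangular_mul_apply_one hb', ← mul_assoc,
      ← mul_assoc, hM]
  have hrow0 := congrArg w (hrow 0)
  have hrow1 := congrArg w (hrow 1)
  rw [w.map_mul, w.map_mul, hk.val_lowerUnipotent_mul_one_zero hc hϖ (hij.trans_le hj)] at hrow0
  rw [w.map_mul, w.map_mul, hk'.val_lowerUnipotent_mul_one_one hc hϖ (i.zero_le.trans_lt hij),
    add_zero] at hrow1
  have hβ : w (b 1 1) ≠ ⊤ := w.ne_top_iff.mpr (apply_one_one_ne_zero_of_upperTriangular hb hbdet)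
  have : w (b 1 1) + j ≤ w (b 1 1) + i :=
    calc w (b 1 1) + j ≤ w (b 1 1) + (w (N 1 1) + w (N' 1 0)) := by
          gcongr
          exact (hk'.le_val_lowerUnipotent_mul_one_zero hϖ hj).trans
            (le_add_of_nonneg_left (hk.val_lowerUnipotent_mul_one_one_nonneg hϖ))
      _ = w (b 1 1) + i := by rw [← add_assoc, hrow1, hrow0]
  exact hij.not_ge (Nat.cast_le.mp ((WithTop.add_le_add_iff_left hβ).mp this))

lemma memDoubleCoset_of_apply_one_eq (hM : M.det ≠ 0) (hk : MemK₁ w c k) {β : F}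
    (h : ∀ j, M 1 j = β * (!![1, 0; ϖ ^ i, 1] * k) 1 j) : MemDoubleCoset w c ϖ i M := by
  have hN : (!![1, 0; ϖ ^ i, 1] * k).det ≠ 0 := by
    rw [det_mul, det_fin_two_of]
    simpa using hk.det_ne_zero
  obtain ⟨b, hb, hbdet, rfl⟩ := exists_upperTriangular_mul_eq hM hN h
  exact ⟨b, k, hb, hbdet, hk, (mul_assoc _ _ _).symm⟩

lemma apply_one_ne_zero_of_val_le_val (hM : M.det ≠ 0) {l l' : Fin 2} (hl : l ≠ l')
    (h : w (M 1 l) ≤ w (M 1 l')) : M 1 l ≠ 0 := by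
  intro h0
  rw [h0, w.map_zero, top_le_iff, w.top_iff] at h
  apply hM
  fin_cases l <;> fin_cases l' <;> simp_all [det_fin_two]

lemma memDoubleCoset_zero_of_val_le (hM : M.det ≠ 0) (h : w (M 1 0) ≤ w (M 1 1)) :
    MemDoubleCoset w c ϖ 0 M := by
  have hd := apply_one_ne_zero_of_val_le_val hM (by decide) h
  have hs : 0 ≤ w (M 1 1 / M 1 0 - 1) := by
    refine w.map_le_sub ?_ w.map_one.ge
    rwa [le_val_div_iff hd, add_zero]
  refine memDoubleCoset_of_apply_one_eq hM (k := !![1, M 1 1 / M 1 0 - 1; 0, 1]) (β := M 1 0)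
    (memK₁_of_entries w.map_one.ge hs (by simp) (by simp [w.map_one])) fun j => ?_
  fin_cases j <;> simp [lowerUnipotent_mul_apply_one]
  field_simp

lemma memDoubleCoset_of_val_add_le (hϖ : w ϖ = 1) (hM : M.det ≠ 0)
    (h : w (M 1 1) + c ≤ w (M 1 0)) : MemDoubleCoset w c ϖ c M := by
  have he := apply_one_ne_zero_of_val_le_val hM (by decide)
    ((le_add_of_nonneg_right (Nat.cast_nonneg' c)).trans h)
  have hs : (c : WithTop ℤ) ≤ w (M 1 0 / M 1 1 - ϖ ^ c) :=
    w.map_le_sub ((le_val_div_iff he).mpr h) (val_pow_of_val_eq_one hϖ c).ge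
  refine memDoubleCoset_of_apply_one_eq hM (k := !![1, 0; M 1 0 / M 1 1 - ϖ ^ c, 1])
    (β := M 1 1) (memK₁_of_entries w.map_one.ge (by simp) hs (by simp [w.map_one])) fun j => ?_
  fin_cases j <;> simp [lowerUnipotent_mul_apply_one]
  field_simp

lemma exists_memDoubleCoset_of_val_lt_of_lt_add (hϖ : w ϖ = 1) (hM : M.det ≠ 0)
    (h₀ : ¬ w (M 1 0) ≤ w (M 1 1)) (hc : ¬ w (M 1 1) + c ≤ w (M 1 0)) :
    ∃ i ≤ c, MemDoubleCoset w c ϖ i M := by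
  have he := apply_one_ne_zero_of_val_le_val hM (by decide) (not_le.mp h₀).le
  have hd : M 1 0 ≠ 0 := fun hd => hc (by rw [hd, w.map_zero]; exact le_top)
  have hϖ0 : ϖ ≠ 0 := w.ne_top_iff.mp (by rw [hϖ]; exact WithTop.one_ne_top)
  obtain ⟨a, ha⟩ := exists_val_eq_coe he
  obtain ⟨b, hb⟩ := exists_val_eq_coe hd
  rw [ha, hb, ← WithTop.coe_natCast, ← WithTop.coe_add, WithTop.coe_le_coe] at hc
  rw [ha, hb, WithTop.coe_le_coe] at h₀
  set n := (b - a).toNat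
  set u := M 1 0 / (M 1 1 * ϖ ^ n)
  have hu : w u = 0 := by
    have hden : M 1 1 * ϖ ^ n ≠ 0 := mul_ne_zero he (pow_ne_zero n hϖ0)
    obtain ⟨r, hr⟩ := exists_val_eq_coe (div_ne_zero hd hden : u ≠ 0)
    have := congrArg w (mul_div_cancel₀ (M 1 0) hden)
    rw [w.map_mul, w.map_mul, ha, hb, hr, val_pow_of_val_eq_one hϖ, ← WithTop.coe_natCast,
      ← WithTop.coe_add, ← WithTop.coe_add, WithTop.coe_inj] at this
    rw [hr, ← WithTop.coe_zero, WithTop.coe_inj]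
    omega
  refine ⟨n, by omega, memDoubleCoset_of_apply_one_eq hM (k := !![u, 0; 0, 1])
    (β := M 1 1) (memK₁_of_entries hu.ge (by simp) (by simp) (by simpa using hu)) fun j => ?_⟩
  fin_cases j <;> simp [lowerUnipotent_mul_apply_one, u]
  field_simp

lemma exists_memDoubleCoset (hϖ : w ϖ = 1) (hM : M.det ≠ 0) :
    ∃ i ≤ c, MemDoubleCoset w c ϖ i M := by
  by_cases hc : w (M 1 1) + c ≤ w (M 1 0)
  · exact ⟨c, le_rfl, memDoubleCoset_of_val_add_le hϖ hM hc⟩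
  by_cases h₀ : w (M 1 0) ≤ w (M 1 1)
  · exact ⟨0, c.zero_le, memDoubleCoset_zero_of_val_le hM h₀⟩
  exact exists_memDoubleCoset_of_val_lt_of_lt_add hϖ hM h₀ hc

end K₁

section IntValuation

variable {v : F → ℤ}

lemma val_one_eq_zero_of_map_mul (hvmul : ∀ x y : F, x ≠ 0 → y ≠ 0 → v (x * y) = v x + v y) :
    v 1 = 0 := by
  have := hvmul 1 1 one_ne_zero one_ne_zero
  rw [one_mul] at this
  omega

open Classical in
/-- The valuation equal to `v` on `F ˣ`, with the junk value `v 0` replaced by `⊤`. -/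
noncomputable def withTopValuation (hvmul : ∀ x y : F, x ≠ 0 → y ≠ 0 → v (x * y) = v x + v y)
    (hvadd : ∀ x y : F, x ≠ 0 → y ≠ 0 → x + y ≠ 0 → min (v x) (v y) ≤ v (x + y)) :
    AddValuation F (WithTop ℤ) :=
  AddValuation.of (fun x => if x = 0 then ⊤ else (v x : WithTop ℤ)) (if_pos rfl)
    (by simp [val_one_eq_zero_of_map_mul hvmul])
    (by
      intro x y
      by_cases hx : x = 0; · simp [hx]
      by_cases hy : y = 0; · simp [hy]
      by_cases hxy : x + y = 0; · simp [hxy]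
      simp only [hx, hy, hxy, if_false, ← WithTop.coe_min, WithTop.coe_le_coe]
      exact hvadd x y hx hy hxy)
    (by
      intro x y
      by_cases hx : x = 0; · simp [hx]
      by_cases hy : y = 0; · simp [hy]
      simp [hx, hy, hvmul x y hx hy, WithTop.coe_add])

variable {hvmul : ∀ x y : F, x ≠ 0 → y ≠ 0 → v (x * y) = v x + v y}
  {hvadd : ∀ x y : F, x ≠ 0 → y ≠ 0 → x + y ≠ 0 → min (v x) (v y) ≤ v (x + y)}

lemma withTopValuation_apply_of_ne_zero {x : F} (hx : x ≠ 0) :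
    withTopValuation hvmul hvadd x = v x := by
  simp [withTopValuation, AddValuation.of_apply, hx]

lemma le_withTopValuation_iff {n : ℤ} {x : F} :
    (n : WithTop ℤ) ≤ withTopValuation hvmul hvadd x ↔ x = 0 ∨ n ≤ v x := by
  by_cases hx : x = 0
  · simp [hx]
  · simp [withTopValuation_apply_of_ne_zero hx, hx]

lemma withTopValuation_eq_zero_iff {x : F} :
    withTopValuation hvmul hvadd x = 0 ↔ x ≠ 0 ∧ v x = 0 := by
  by_cases hx : x = 0
  · simp [hx]
  · simp [withTopValuation_apply_of_ne_zero hx, hx]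

lemma natCast_le_withTopValuation_iff {n : ℕ} {x : F} :
    (n : WithTop ℤ) ≤ withTopValuation hvmul hvadd x ↔ x = 0 ∨ (n : ℤ) ≤ v x := by
  rw [← le_withTopValuation_iff, WithTop.coe_natCast]

lemma memK₁_withTopValuation_iff {c : ℕ} {k : Matrix (Fin 2) (Fin 2) F} :
    MemK₁ (withTopValuation hvmul hvadd) c k ↔
      (∀ i j, k i j = 0 ∨ 0 ≤ v (k i j)) ∧ k.det ≠ 0 ∧ v k.det = 0 ∧
        (k 1 0 = 0 ∨ (c : ℤ) ≤ v (k 1 0)) ∧ (k 1 1 - 1 = 0 ∨ (c : ℤ) ≤ v (k 1 1 - 1)) := by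
  constructor
  · rintro ⟨hint, hdet, h10, h11⟩
    exact ⟨fun i j => le_withTopValuation_iff.mp (hint i j), withTopValuation_eq_zero_iff.mp hdet
      |>.1, withTopValuation_eq_zero_iff.mp hdet |>.2, natCast_le_withTopValuation_iff.mp h10,
      natCast_le_withTopValuation_iff.mp h11⟩
  · rintro ⟨hint, hdet, hdetv, h10, h11⟩
    exact ⟨fun i j => le_withTopValuation_iff.mpr (hint i j),
      withTopValuation_eq_zero_iff.mpr ⟨hdet, hdetv⟩, natCast_le_withTopValuation_iff.mpr h10,
      natCast_le_withTopValuation_iff.mpr h11⟩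

lemma memDoubleCoset_withTopValuation_iff {c i : ℕ} {ϖ : F} {M : Matrix (Fin 2) (Fin 2) F} :
    MemDoubleCoset (withTopValuation hvmul hvadd) c ϖ i M ↔
      ∃ b k : Matrix (Fin 2) (Fin 2) F, b 1 0 = 0 ∧ b.det ≠ 0 ∧
        (∀ i' j', k i' j' = 0 ∨ 0 ≤ v (k i' j')) ∧ k.det ≠ 0 ∧ v k.det = 0 ∧
        (k 1 0 = 0 ∨ (c : ℤ) ≤ v (k 1 0)) ∧ (k 1 1 - 1 = 0 ∨ (c : ℤ) ≤ v (k 1 1 - 1)) ∧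
        M = b * !![1, 0; ϖ ^ i, 1] * k := by
  simp only [MemDoubleCoset, memK₁_withTopValuation_iff, and_assoc]

end IntValuation

end DoubleCosets

/-- For every `c ≥ 1`, `GL₂(F)` is the disjoint union over
`i = 0, …, c` of the double cosets `B(F)·[[1,0],[ϖⁱ,1]]·K₁(ϖᶜ)`: every invertible
matrix lies in exactly one of them. -/
theorem stmt_12
    (F : Type*) [Field F]
    (v : F → ℤ) (ϖ : F)
    (hϖ0 : ϖ ≠ 0) (hϖv : v ϖ = 1)
    (hvmul : ∀ x y : F, x ≠ 0 → y ≠ 0 → v (x * y) = v x + v y)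
    (hvadd : ∀ x y : F, x ≠ 0 → y ≠ 0 → x + y ≠ 0 → min (v x) (v y) ≤ v (x + y))
    (c : ℕ) (hc : 1 ≤ c) :
    ∀ M : Matrix (Fin 2) (Fin 2) F, M.det ≠ 0 →
      ∃! i : ℕ, i ≤ c ∧ ∃ b k : Matrix (Fin 2) (Fin 2) F,
        b 1 0 = 0 ∧ b.det ≠ 0 ∧
        (∀ i' j', k i' j' = 0 ∨ 0 ≤ v (k i' j')) ∧ k.det ≠ 0 ∧ v k.det = 0 ∧
        (k 1 0 = 0 ∨ (c : ℤ) ≤ v (k 1 0)) ∧ (k 1 1 - 1 = 0 ∨ (c : ℤ) ≤ v (k 1 1 - 1)) ∧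
        M = b * !![1, 0; ϖ ^ i, 1] * k := by
  intro M hM
  set w := withTopValuation hvmul hvadd
  have hϖ : w ϖ = 1 := by rw [withTopValuation_apply_of_ne_zero hϖ0, hϖv]; rfl
  obtain ⟨i, hic, hi⟩ := exists_memDoubleCoset hϖ hM
  refine ⟨i, ⟨hic, memDoubleCoset_withTopValuation_iff.mp hi⟩, fun j ⟨hjc, hj⟩ => ?_⟩
  replace hj : MemDoubleCoset w c ϖ j M := memDoubleCoset_withTopValuation_iff.mpr hj
  exact le_antisymm (le_of_memDoubleCoset_of_memDoubleCoset hc hϖ hjc hi hj)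
    (le_of_memDoubleCoset_of_memDoubleCoset hc hϖ hic hj hi)
end

section
/- Let E = F(√D) be the unramified quadratic extension of F, fix an integer k ≥ 1, and let K̃ = {g ∈ GL₂(O_E) : g ≡ I mod ϖᵏO_E} (all four entries of g − I lie in ϖᵏO_E). Then for a₁ ∈ Fˣ and m ∈ F: [[1,0],[√D,1]]·[[a₁,m],[0,1]] ∈ B(E)·[[0,1],[−1,−1/√D]]·K̃ if and only if a₁ ∈ 1+ϖᵏO_F and m ∈ ϖᵏO_F. -/
/-!
Let `val = exp ∘ (-v)` be the valuation attached to `v`, so that `κ ∈ K̃` says that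
`val (κ - 1) ≤ exp (-k) < 1` entrywise. If `[[1,0],[√D,1]]·[[a₁,m],[0,1]] = b·w·κ` with `b` upper
triangular, the second rows agree up to the scalar `b₁₁`, so
`(√D a₁ : √D m + 1) = (√D κ₀₀ + κ₁₀ : √D κ₀₁ + κ₁₁)`. For `κ ≡ 1` the right-hand ratio is
`√D (1 + ε)` with `ε ≡ 0`, whence `a₁ = (1 + m√D)(1 + ε)`.
Writing `ε = x + y√D` with `x, y ∈ F` (both `≡ 0`, the extension being unramified) and comparing
`√D`-coordinates gives `m (1 + x) = -y`, so `m ≡ 0`, and then `a₁ - 1 = x + yDm ≡ 0`.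
Conversely `[[1,0],[√D,1]] = [[-1/√D,-1],[0,-√D]]·w`, and `[[a₁,m],[0,1]] ∈ K̃`.
-/

open WithZero

section OrdValuation

variable {E : Type*} [Field E] {v : E → ℤ}

lemma ord_one (hvmul : ∀ x y : E, x ≠ 0 → y ≠ 0 → v (x * y) = v x + v y) : v 1 = 0 := by
  have := hvmul 1 1 one_ne_zero one_ne_zero
  rw [mul_one] at this
  omega

open scoped Classical in
noncomputable def valuationOfOrd
    (hvmul : ∀ x y : E, x ≠ 0 → y ≠ 0 → v (x * y) = v x + v y)
    (hvadd : ∀ x y : E, x ≠ 0 → y ≠ 0 → x + y ≠ 0 → min (v x) (v y) ≤ v (x + y)) :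
    Valuation E ℤᵐ⁰ where
  toFun x := if x = 0 then 0 else exp (-v x)
  map_zero' := if_pos rfl
  map_one' := by simp [ord_one hvmul]
  map_mul' x y := by
    by_cases hx : x = 0
    · simp [hx]
    by_cases hy : y = 0
    · simp [hy]
    simp only [mul_eq_zero, hx, hy, or_self, if_false, hvmul x y hx hy, neg_add, exp_add]
  map_add_le_max' x y := by
    by_cases hx : x = 0
    · simp [hx]
    by_cases hy : y = 0
    · simp [hy]
    by_cases hxy : x + y = 0
    · simp [hxy]
    simp only [hx, hy, hxy, if_false, le_max_iff, exp_le_exp, neg_le_neg_iff]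
    have := hvadd x y hx hy hxy
    omega

variable (hvmul : ∀ x y : E, x ≠ 0 → y ≠ 0 → v (x * y) = v x + v y)
  (hvadd : ∀ x y : E, x ≠ 0 → y ≠ 0 → x + y ≠ 0 → min (v x) (v y) ≤ v (x + y))

include hvmul in
lemma ord_eq_zero_of_mul_self {s : E} (hs : s ≠ 0) (h : v (s * s) = 0) : v s = 0 := by
  have := hvmul s s hs hs
  omega

lemma valuationOfOrd_apply {x : E} (hx : x ≠ 0) :
    valuationOfOrd hvmul hvadd x = exp (-v x) := if_neg hx

lemma valuationOfOrd_le_exp_neg_iff (n : ℤ) (x : E) :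
    valuationOfOrd hvmul hvadd x ≤ exp (-n) ↔ x = 0 ∨ n ≤ v x := by
  by_cases hx : x = 0
  · simp [hx]
  · simp only [valuationOfOrd_apply hvmul hvadd hx, hx, false_or, exp_le_exp, neg_le_neg_iff]

lemma valuationOfOrd_le_one_iff (x : E) :
    valuationOfOrd hvmul hvadd x ≤ 1 ↔ x = 0 ∨ 0 ≤ v x := by
  simpa using valuationOfOrd_le_exp_neg_iff hvmul hvadd 0 x

lemma valuationOfOrd_eq_one_iff (x : E) :
    valuationOfOrd hvmul hvadd x = 1 ↔ x ≠ 0 ∧ v x = 0 := by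
  by_cases hx : x = 0
  · simp [hx]
  · simp [valuationOfOrd_apply hvmul hvadd hx, hx]

lemma valuationOfOrd_add_eq_max {x y : E} (hx : x ≠ 0) (hy : y ≠ 0) (hxy : x + y ≠ 0)
    (h : v (x + y) = min (v x) (v y)) :
    valuationOfOrd hvmul hvadd (x + y) =
      max (valuationOfOrd hvmul hvadd x) (valuationOfOrd hvmul hvadd y) := by
  rw [valuationOfOrd_apply hvmul hvadd hx, valuationOfOrd_apply hvmul hvadd hy,
    valuationOfOrd_apply hvmul hvadd hxy, h]
  rcases le_total (v x) (v y) with h' | h' <;> simp [h', -exp_neg]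

end OrdValuation

section QuadraticExtension

variable {E : Type*} [Field E] {F : Subfield E} {D s : E}

lemma ne_zero_of_not_exists_mul_self (hDns : ¬ ∃ y ∈ F, y * y = D) : D ≠ 0 :=
  fun hD => hDns ⟨0, F.zero_mem, by rw [hD, mul_zero]⟩

lemma eq_zero_of_add_mul_eq_zero (hDns : ¬ ∃ y ∈ F, y * y = D) (hsq : s * s = D)
    {a b : E} (ha : a ∈ F) (hb : b ∈ F) (h : a + b * s = 0) : b = 0 := by
  by_contra hb0
  have hs : s = -a / b := by
    rw [eq_div_iff hb0]
    linear_combination h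
  exact hDns ⟨-a / b, F.div_mem (F.neg_mem ha) hb, by rw [← hs, hsq]⟩

variable {Γ₀ : Type*} [LinearOrderedCommGroupWithZero Γ₀] (val : Valuation E Γ₀)

lemma exists_add_mul_eq_of_le (hgen : ∀ x : E, ∃ a ∈ F, ∃ b ∈ F, x = a + b * s)
    (hmax : ∀ a ∈ F, ∀ b ∈ F, val (a + b * s) = max (val a) (val b)) {γ : Γ₀} {e : E}
    (he : val e ≤ γ) : ∃ x ∈ F, ∃ y ∈ F, val x ≤ γ ∧ val y ≤ γ ∧ e = x + y * s := by
  obtain ⟨x, hx, y, hy, rfl⟩ := hgen e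
  rw [hmax x hx y hy, max_le_iff] at he
  exact ⟨x, hx, y, hy, he.1, he.2, rfl⟩

lemma le_of_eq_mul_one_add (hDns : ¬ ∃ y ∈ F, y * y = D) (hsq : s * s = D) (hD : D ∈ F)
    (hvD : val D ≤ 1) (hgen : ∀ x : E, ∃ a ∈ F, ∃ b ∈ F, x = a + b * s)
    (hmax : ∀ a ∈ F, ∀ b ∈ F, val (a + b * s) = max (val a) (val b)) {γ : Γ₀} (hγ : γ < 1)
    {a m ε : E} (ha : a ∈ F) (hm : m ∈ F) (hε : val ε ≤ γ) (h : a = (1 + m * s) * (1 + ε)) :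
    val (a - 1) ≤ γ ∧ val m ≤ γ := by
  obtain ⟨x, hx, y, hy, hvx, hvy, rfl⟩ := exists_add_mul_eq_of_le val hgen hmax hε
  have hsplit : (1 + x + y * D * m - a) + (y + m * (1 + x)) * s = 0 := by
    rw [h, ← hsq]; ring
  have hy' : y + m * (1 + x) = 0 := by
    refine eq_zero_of_add_mul_eq_zero hDns hsq ?_ ?_ hsplit
    · exact F.sub_mem (F.add_mem (F.add_mem F.one_mem hx) (F.mul_mem (F.mul_mem hy hD) hm)) ha
    · exact F.add_mem hy (F.mul_mem hm (F.add_mem F.one_mem hx))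
  have hvm : val m = val y := by
    have := congrArg val (eq_neg_of_add_eq_zero_right hy')
    rwa [map_mul, val.map_one_add_of_lt (hvx.trans_lt hγ), mul_one, Valuation.map_neg] at this
  refine ⟨?_, hvm ▸ hvy⟩
  have ha1 : a - 1 = x + y * (D * m) := by linear_combination -hsplit + s * hy'
  rw [ha1]
  refine val.map_add_le hvx ?_
  rw [map_mul, map_mul]
  exact mul_le_of_le_of_le_one hvy (mul_le_one' hvD ((hvm ▸ hvy).trans hγ.le))

lemma exists_eq_mul_one_add (hs : val s = 1) {γ : Γ₀} (hγ : γ < 1) {a m u w : E}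
    (hu : val (u - s) ≤ γ) (hw : val (w - 1) ≤ γ) (h : s * a * w = (s * m + 1) * u) :
    ∃ ε, val ε ≤ γ ∧ a = (1 + m * s) * (1 + ε) := by
  have hw1 : val w = 1 := by
    simpa using val.map_one_add_of_lt (hw.trans_lt hγ)
  have hw0 : w ≠ 0 := val.ne_zero_iff.1 (hw1 ▸ one_ne_zero)
  have hs0 : s ≠ 0 := val.ne_zero_iff.1 (hs ▸ one_ne_zero)
  refine ⟨(u - s * w) / (s * w), ?_, ?_⟩
  · rw [map_div₀, map_mul, hs, hw1, mul_one, div_one,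
      show u - s * w = (u - s) - s * (w - 1) by ring]
    exact val.map_sub_le hu (by rwa [map_mul, hs, one_mul])
  · field_simp
    linear_combination h

lemma row_one_cross_mul_eq (hsq : s * s = D) (hD : D ≠ 0) {a m : E}
    {b k : Matrix (Fin 2) (Fin 2) E} (hb : b 1 0 = 0)
    (h : !![1, 0; s, 1] * !![a, m; 0, 1] = b * !![0, 1; -1, -(s / D)] * k) :
    s * a * (s * k 0 1 + k 1 1) = (s * m + 1) * (s * k 0 0 + k 1 0) := by
  have h10 := congrFun (congrFun h 1) 0
  have h11 := congrFun (congrFun h 1) 1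
  simp only [Fin.isValue, Matrix.mul_apply, Matrix.of_apply, Matrix.cons_val',
    Matrix.cons_val_fin_one, Matrix.cons_val_one, Matrix.cons_val_zero, Fin.sum_univ_two, mul_zero,
    add_zero, hb, zero_mul, zero_add, mul_neg, mul_one, neg_mul] at h10 h11
  have hiD : s / D * s = 1 := by rw [div_mul_eq_mul_div, hsq, div_self hD]
  linear_combination (s * k 0 1 + k 1 1) * h10 - (s * k 0 0 + k 1 0) * h11
    + b 1 1 * (k 0 0 * k 1 1 - k 0 1 * k 1 0) * hiD

lemma le_of_lowerUnipotent_mul_eq (hDns : ¬ ∃ y ∈ F, y * y = D) (hsq : s * s = D) (hD : D ∈ F)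
    (hs : val s = 1) (hgen : ∀ x : E, ∃ a ∈ F, ∃ b ∈ F, x = a + b * s)
    (hmax : ∀ a ∈ F, ∀ b ∈ F, val (a + b * s) = max (val a) (val b)) {γ : Γ₀} (hγ : γ < 1)
    {a m : E} (ha : a ∈ F) (hm : m ∈ F) {b k : Matrix (Fin 2) (Fin 2) E} (hb : b 1 0 = 0)
    (hk : ∀ i j, val (k i j - (1 : Matrix (Fin 2) (Fin 2) E) i j) ≤ γ)
    (h : !![1, 0; s, 1] * !![a, m; 0, 1] = b * !![0, 1; -1, -(s / D)] * k) :
    val (a - 1) ≤ γ ∧ val m ≤ γ := by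
  have hvD : val D = 1 := by rw [← hsq, map_mul, hs, one_mul]
  have hk00 : val (k 0 0 - 1) ≤ γ := by simpa using hk 0 0
  have hk01 : val (k 0 1) ≤ γ := by simpa using hk 0 1
  have hk10 : val (k 1 0) ≤ γ := by simpa using hk 1 0
  have hk11 : val (k 1 1 - 1) ≤ γ := by simpa using hk 1 1
  have hu : val (s * k 0 0 + k 1 0 - s) ≤ γ := by
    rw [show s * k 0 0 + k 1 0 - s = s * (k 0 0 - 1) + k 1 0 by ring]
    exact val.map_add_le (by rwa [map_mul, hs, one_mul]) hk10
  have hw : val (s * k 0 1 + k 1 1 - 1) ≤ γ := by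
    rw [add_sub_assoc]
    exact val.map_add_le (by rwa [map_mul, hs, one_mul]) hk11
  obtain ⟨ε, hε, hae⟩ := exists_eq_mul_one_add val hs hγ hu hw
    (row_one_cross_mul_eq hsq (ne_zero_of_not_exists_mul_self hDns) hb h)
  exact le_of_eq_mul_one_add val hDns hsq hD hvD.le hgen hmax hγ ha hm hε hae

lemma borel_mul_cosetRep (hsq : s * s = D) (hD : D ≠ 0) :
    !![-(s / D), -1; 0, -s] * !![0, 1; -1, -(s / D)] = !![1, 0; s, 1] := by
  have hiD : s * (s / D) = 1 := by rw [mul_div_assoc', hsq, div_self hD]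
  simp [hiD]

lemma det_borel_factor (hsq : s * s = D) (hD : D ≠ 0) : (!![-(s / D), -1; 0, -s]).det = 1 := by
  rw [Matrix.det_fin_two_of]
  field_simp
  linear_combination hsq

end QuadraticExtension

lemma valuationOfOrd_add_mul_eq_max {E : Type*} [Field E] {F : Subfield E} {v : E → ℤ}
    (hvmul : ∀ x y : E, x ≠ 0 → y ≠ 0 → v (x * y) = v x + v y)
    (hvadd : ∀ x y : E, x ≠ 0 → y ≠ 0 → x + y ≠ 0 → min (v x) (v y) ≤ v (x + y))
    {D s : E} (hDns : ¬ ∃ y ∈ F, y * y = D) (hsq : s * s = D) (hs0 : s ≠ 0) (hvs : v s = 0)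
    (hinert : ∀ a b : E, a ∈ F → b ∈ F → a ≠ 0 → b ≠ 0 → v (a + b * s) = min (v a) (v b)) :
    ∀ a ∈ F, ∀ b ∈ F, valuationOfOrd hvmul hvadd (a + b * s) =
      max (valuationOfOrd hvmul hvadd a) (valuationOfOrd hvmul hvadd b) := by
  intro a ha b hb
  have hs : valuationOfOrd hvmul hvadd s = 1 :=
    (valuationOfOrd_eq_one_iff hvmul hvadd s).2 ⟨hs0, hvs⟩
  by_cases hb0 : b = 0
  · simp [hb0]
  by_cases ha0 : a = 0
  · simp [ha0, hs]
  rw [← mul_one (valuationOfOrd hvmul hvadd b), ← hs, ← map_mul]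
  refine valuationOfOrd_add_eq_max hvmul hvadd ha0 (mul_ne_zero hb0 hs0) ?_ ?_
  · exact fun h => hb0 (eq_zero_of_add_mul_eq_zero hDns hsq ha hb h)
  · rw [hinert a b ha hb ha0 hb0, hvmul b s hb0 hs0, hvs, add_zero]

theorem stmt_18_general
    (E : Type*) [Field E] (F : Subfield E)
    (v : E → ℤ)
    (hvmul : ∀ x y : E, x ≠ 0 → y ≠ 0 → v (x * y) = v x + v y)
    (hvadd : ∀ x y : E, x ≠ 0 → y ≠ 0 → x + y ≠ 0 → min (v x) (v y) ≤ v (x + y))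
    (D sqrtD : E) (hDF : D ∈ F) (hDv : v D = 0)
    (hDns : ¬ ∃ y ∈ F, y * y = D)
    (hsq : sqrtD * sqrtD = D)
    (hgen : ∀ x : E, ∃ a ∈ F, ∃ b ∈ F, x = a + b * sqrtD)
    (hinert : ∀ a b : E, a ∈ F → b ∈ F → a ≠ 0 → b ≠ 0 →
        v (a + b * sqrtD) = min (v a) (v b))
    (k : ℕ) (hk : 1 ≤ k) :
    ∀ a₁ m : E, a₁ ∈ F → m ∈ F → a₁ ≠ 0 →
      ((∃ b kk : Matrix (Fin 2) (Fin 2) E,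
          b 1 0 = 0 ∧ b.det ≠ 0 ∧
          (∀ i j, kk i j = 0 ∨ 0 ≤ v (kk i j)) ∧ kk.det ≠ 0 ∧ v kk.det = 0 ∧
          (∀ i j, kk i j - (1 : Matrix (Fin 2) (Fin 2) E) i j = 0 ∨
            (k : ℤ) ≤ v (kk i j - (1 : Matrix (Fin 2) (Fin 2) E) i j)) ∧
          !![1, 0; sqrtD, 1] * !![a₁, m; 0, 1] = b * !![0, 1; -1, -(sqrtD / D)] * kk)
        ↔ ((a₁ - 1 = 0 ∨ (k : ℤ) ≤ v (a₁ - 1)) ∧ (m = 0 ∨ (k : ℤ) ≤ v m))) := by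
  intro a₁ m ha₁ hm _
  simp only [← valuationOfOrd_le_one_iff hvmul hvadd, ← valuationOfOrd_le_exp_neg_iff hvmul hvadd]
  set val := valuationOfOrd hvmul hvadd
  have hD0 : D ≠ 0 := ne_zero_of_not_exists_mul_self hDns
  have hs0 : sqrtD ≠ 0 := right_ne_zero_of_mul (hsq ▸ hD0)
  have hvs : v sqrtD = 0 := ord_eq_zero_of_mul_self hvmul hs0 (hsq ▸ hDv)
  have hs : val sqrtD = 1 := (valuationOfOrd_eq_one_iff hvmul hvadd sqrtD).2 ⟨hs0, hvs⟩
  have hmax := valuationOfOrd_add_mul_eq_max hvmul hvadd hDns hsq hs0 hvs hinert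
  have hγ : exp (-(k : ℤ)) < 1 := by
    rw [← exp_zero, exp_lt_exp]; omega
  constructor
  · rintro ⟨b, kk, hb, -, -, -, -, hkk, h⟩
    exact le_of_lowerUnipotent_mul_eq val hDns hsq hDF hs hgen hmax hγ ha₁ hm hb hkk h
  · rintro ⟨ha, hm⟩
    have hva : val a₁ = 1 := by simpa using val.map_one_add_of_lt (ha.trans_lt hγ)
    obtain ⟨ha0, hva0⟩ := (valuationOfOrd_eq_one_iff hvmul hvadd a₁).1 hva
    refine ⟨!![-(sqrtD / D), -1; 0, -sqrtD], !![a₁, m; 0, 1], rfl,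
      by rw [det_borel_factor hsq hD0]; exact one_ne_zero, ?_, by simpa, by simpa, ?_,
      by rw [borel_mul_cosetRep hsq hD0]⟩
    · intro i j
      fin_cases i <;> fin_cases j <;> simp [hva, hm.trans hγ.le, -exp_neg]
    · intro i j
      fin_cases i <;> fin_cases j <;> simp [ha, hm, -exp_neg]

/-- With `E = F(√D)` the unramified quadratic extension and
`K̃ = {g ∈ GL₂(O_E) : g ≡ I mod ϖᵏO_E}` (`k ≥ 1`): for `a₁ ∈ Fˣ` and `m ∈ F`,
`[[1,0],[√D,1]]·[[a₁,m],[0,1]] ∈ B(E)·[[0,1],[−1,−1/√D]]·K̃` iff `a₁ ∈ 1+ϖᵏO_F`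
and `m ∈ ϖᵏO_F` (here `1/√D = √D/D`). -/
theorem stmt_18
    (E : Type*) [Field E] (F : Subfield E)
    (v : E → ℤ) (ϖ : E) (q : ℕ) (hq : 2 ≤ q)
    (hϖF : ϖ ∈ F) (hϖ0 : ϖ ≠ 0) (hϖv : v ϖ = 1)
    (hvmul : ∀ x y : E, x ≠ 0 → y ≠ 0 → v (x * y) = v x + v y)
    (hvadd : ∀ x y : E, x ≠ 0 → y ≠ 0 → x + y ≠ 0 → min (v x) (v y) ≤ v (x + y))
    (hodd : (2 : E) ≠ 0 ∧ v 2 = 0)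
    (D sqrtD : E) (hDF : D ∈ F) (hD0 : D ≠ 0) (hDv : v D = 0)
    (hDns : ¬ ∃ y ∈ F, y * y = D)
    (hsq : sqrtD * sqrtD = D)
    (hgen : ∀ x : E, ∃ a ∈ F, ∃ b ∈ F, x = a + b * sqrtD)
    (hinert : ∀ a b : E, a ∈ F → b ∈ F → a ≠ 0 → b ≠ 0 →
        v (a + b * sqrtD) = min (v a) (v b))
    (hOE : ∀ x : E, (x = 0 ∨ 0 ≤ v x) →
        ∃ a ∈ F, ∃ b ∈ F, (a = 0 ∨ 0 ≤ v a) ∧ (b = 0 ∨ 0 ≤ v b) ∧ x = a + b * sqrtD)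
    (k : ℕ) (hk : 1 ≤ k) :
    ∀ a₁ m : E, a₁ ∈ F → m ∈ F → a₁ ≠ 0 →
      ((∃ b kk : Matrix (Fin 2) (Fin 2) E,
          b 1 0 = 0 ∧ b.det ≠ 0 ∧
          (∀ i j, kk i j = 0 ∨ 0 ≤ v (kk i j)) ∧ kk.det ≠ 0 ∧ v kk.det = 0 ∧
          (∀ i j, kk i j - (1 : Matrix (Fin 2) (Fin 2) E) i j = 0 ∨
            (k : ℤ) ≤ v (kk i j - (1 : Matrix (Fin 2) (Fin 2) E) i j)) ∧
          !![1, 0; sqrtD, 1] * !![a₁, m; 0, 1] = b * !![0, 1; -1, -(sqrtD / D)] * kk)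
        ↔ ((a₁ - 1 = 0 ∨ (k : ℤ) ≤ v (a₁ - 1)) ∧ (m = 0 ∨ (k : ℤ) ≤ v m))) :=
  stmt_18_general E F v hvmul hvadd D sqrtD hDF hDv hDns hsq hgen hinert k hk
end
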